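/- arXiv:1410.5350 — 8 statements merged into one kernel-verified Lean document; each statement's English description precedes it below -/
import Mathlib

section
/- Let N = m+n for positive integers m, n, let C = diag(𝟙ₘ, −𝟙ₙ) and 𝓔 = diag(ε₁,…,ε_N) with εₚ ∈ {+1,−1}. Let μ₁,…,μ_r ∈ ℂ\{0} be such that the 4r complex numbers ±μ_j, ±conj(μ_j) (j = 1,…,r) are pairwise distinct, and let B₁,…,B_r ∈ M_N(ℂ). Define g(λ) = 𝟙 + Σ_{j=1}^r (λ/μ_j)(B_j/(λ−μ_j) + C B_j C/(λ+μ_j)) and ĝ(λ) = 𝓔 g(conj(λ))† 𝓔. If g(λ) ĝ(λ) = 𝟙 for every λ ∈ ℂ outside the pole set {±μ_j, ±conj(μ_j)}, then for every i = 1,…,r: B_i · ( 𝟙 + Σ_{j=1}^r (μ_i/conj(μ_j)) ( 𝓔 B_j† 𝓔/(μ_i − conj(μ_j)) + 𝓔 C B_j† C 𝓔/(μ_i + conj(μ_j)) ) ) = 0. -/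
noncomputable section

open Matrix Filter Topology

/-- The Cartan involution matrix `C = diag(𝟙ₘ, -𝟙ₙ)`. -/
def Cmat (m n : ℕ) : Matrix (Fin m ⊕ Fin n) (Fin m ⊕ Fin n) ℂ :=
  Matrix.fromBlocks 1 0 0 (-1)

/-- The signature matrix `𝓔 = diag(ε₁,…,ε_N)`. -/
def Emat {m n : ℕ} (ε : Fin m ⊕ Fin n → ℝ) : Matrix (Fin m ⊕ Fin n) (Fin m ⊕ Fin n) ℂ :=
  Matrix.diagonal fun p => (ε p : ℂ)

lemma Emat_mul_Emat {m n : ℕ} (ε : Fin m ⊕ Fin n → ℝ) (hε : ∀ p, ε p = 1 ∨ ε p = -1) :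
    Emat ε * Emat ε = 1 := by
  rw [Emat, Matrix.diagonal_mul_diagonal]
  convert Matrix.diagonal_one with p
  rcases hε p with h | h <;> simp [h]

lemma Cmat_conjTranspose (m n : ℕ) : (Cmat m n)ᴴ = Cmat m n := by
  simp [Cmat, Matrix.fromBlocks_conjTranspose]

/-- Residue relations for a dressing factor with generic poles: if
`g(λ) = 𝟙 + Σⱼ (λ/μⱼ)(Bⱼ/(λ-μⱼ) + CBⱼC/(λ+μⱼ))` satisfies `g(λ) 𝓔 g(λ*)† 𝓔 = 𝟙`
away from the poles `±μⱼ, ±μⱼ*` (all distinct), then the residue at each `μᵢ` yields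
`Bᵢ (𝟙 + Σⱼ (μᵢ/μⱼ*)(𝓔Bⱼ†𝓔/(μᵢ-μⱼ*) + 𝓔CBⱼ†C𝓔/(μᵢ+μⱼ*))) = 0`. -/
theorem generic_residue_relations {m n r : ℕ} (hm : 0 < m) (hn : 0 < n) (hr : 0 < r)
    (ε : Fin m ⊕ Fin n → ℝ) (hε : ∀ p, ε p = 1 ∨ ε p = -1)
    (μ : Fin r → ℂ) (hμ0 : ∀ j, μ j ≠ 0)
    (hdist : Function.Injective fun jk : Fin r × Fin 4 =>
      ![μ jk.1, -μ jk.1, starRingEnd ℂ (μ jk.1), -starRingEnd ℂ (μ jk.1)] jk.2)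
    (B : Fin r → Matrix (Fin m ⊕ Fin n) (Fin m ⊕ Fin n) ℂ)
    (g : ℂ → Matrix (Fin m ⊕ Fin n) (Fin m ⊕ Fin n) ℂ)
    (hg : ∀ lam, g lam = 1 + ∑ j, (lam / μ j) •
        ((lam - μ j)⁻¹ • B j + (lam + μ j)⁻¹ • (Cmat m n * B j * Cmat m n)))
    (hunit : ∀ lam : ℂ,
      (∀ j, lam ≠ μ j ∧ lam ≠ -μ j ∧ lam ≠ starRingEnd ℂ (μ j) ∧ lam ≠ -starRingEnd ℂ (μ j)) →
      g lam * (Emat ε * (g (starRingEnd ℂ lam))ᴴ * Emat ε) = 1) :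
    ∀ i, B i * (1 + ∑ j, (μ i / starRingEnd ℂ (μ j)) •
        ((μ i - starRingEnd ℂ (μ j))⁻¹ • (Emat ε * (B j)ᴴ * Emat ε)
          + (μ i + starRingEnd ℂ (μ j))⁻¹ •
            (Emat ε * (Cmat m n * (B j)ᴴ * Cmat m n) * Emat ε))) = 0 := by
  classical
  intro i
  set E := Emat ε with hEdef
  set C := Cmat m n with hCdef
  have hEE : E * E = 1 := Emat_mul_Emat ε hε
  have hCH : Cᴴ = C := Cmat_conjTranspose m n
  set cj : ℂ → ℂ := fun z => starRingEnd ℂ z with hcj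
  -- distinctness consequences
  set v : Fin r × Fin 4 → ℂ :=
    fun jk => ![μ jk.1, -μ jk.1, starRingEnd ℂ (μ jk.1), -starRingEnd ℂ (μ jk.1)] jk.2 with hv
  have hvpair : ∀ (j k : Fin r) (a b : Fin 4), a ≠ b → v (j, a) = v (k, b) → False := by
    intro j k a b hab h
    have := hdist h
    exact hab (by simpa using congrArg Prod.snd this)
  have hinj : ∀ j k : Fin r, μ j = μ k → j = k := by
    intro j k h
    have : ((j, 0) : Fin r × Fin 4) = (k, 0) := hdist (by simpa [v] using h)
    simpa using congrArg Prod.fst this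
  have hne_neg : ∀ j k : Fin r, μ j ≠ -μ k := fun j k h =>
    hvpair j k 0 1 (by decide) (by simpa [v] using h)
  have hne_c : ∀ j k : Fin r, μ j ≠ starRingEnd ℂ (μ k) := fun j k h =>
    hvpair j k 0 2 (by decide) (by simpa [v] using h)
  have hne_nc : ∀ j k : Fin r, μ j ≠ -starRingEnd ℂ (μ k) := fun j k h =>
    hvpair j k 0 3 (by decide) (by simpa [v] using h)
  have hcμ0 : ∀ j, starRingEnd ℂ (μ j) ≠ 0 := fun j => by
    simpa using star_ne_zero.mpr (hμ0 j)
  -- the conjugate dressing factor as an explicit rational function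
  have hghat : ∀ lam : ℂ, E * (g (starRingEnd ℂ lam))ᴴ * E
      = 1 + ∑ j, (lam / starRingEnd ℂ (μ j)) •
        ((lam - starRingEnd ℂ (μ j))⁻¹ • (E * (B j)ᴴ * E)
          + (lam + starRingEnd ℂ (μ j))⁻¹ • (E * (C * (B j)ᴴ * C) * E)) := by
    intro lam
    rw [hg]
    simp only [conjTranspose_add, conjTranspose_one, conjTranspose_sum, conjTranspose_smul,
      conjTranspose_mul, hCH, map_div₀, map_sub, map_add, map_inv₀, Complex.conj_conj,
      RingHom.map_one, star_one, star_div₀, star_sub, star_add, star_inv₀, Complex.star_def,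
      Complex.conj_conj]
    simp only [Matrix.mul_add, Matrix.add_mul, Matrix.mul_one, Matrix.one_mul, Finset.mul_sum,
      Finset.sum_mul, Matrix.mul_smul, Matrix.smul_mul, hEE, Matrix.mul_assoc]
  -- pole set
  set S : Set ℂ := (Set.range v)ᶜ with hS
  have hSdense : Dense S := ((Set.finite_range v).countable).dense_compl ℂ
  have hnb : (𝓝[S] (μ i)).NeBot := mem_closure_iff_nhdsWithin_neBot.mp (hSdense _)
  have hSgood : ∀ lam ∈ S, ∀ j, lam ≠ μ j ∧ lam ≠ -μ j ∧ lam ≠ starRingEnd ℂ (μ j)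
      ∧ lam ≠ -starRingEnd ℂ (μ j) := by
    intro lam hl j
    refine ⟨fun h => hl ⟨(j, 0), by simp [v, h]⟩, fun h => hl ⟨(j, 1), by simp [v, h]⟩,
      fun h => hl ⟨(j, 2), by simp [v, h]⟩, fun h => hl ⟨(j, 3), by simp [v, h]⟩⟩
  -- the limit matrix
  set M : Matrix (Fin m ⊕ Fin n) (Fin m ⊕ Fin n) ℂ := 1 + ∑ j, (μ i / starRingEnd ℂ (μ j)) •
        ((μ i - starRingEnd ℂ (μ j))⁻¹ • (E * (B j)ᴴ * E)
          + (μ i + starRingEnd ℂ (μ j))⁻¹ • (E * (C * (B j)ᴴ * C) * E)) with hM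
  -- tendsto of the conjugate factor
  have hψ : Tendsto (fun lam => E * (g (starRingEnd ℂ lam))ᴴ * E) (𝓝[S] μ i) (𝓝 M) := by
    have h1 : Tendsto (fun lam => 1 + ∑ j, (lam / starRingEnd ℂ (μ j)) •
        ((lam - starRingEnd ℂ (μ j))⁻¹ • (E * (B j)ᴴ * E)
          + (lam + starRingEnd ℂ (μ j))⁻¹ • (E * (C * (B j)ᴴ * C) * E))) (𝓝 (μ i)) (𝓝 M) := by
      rw [hM]
      refine tendsto_const_nhds.add (tendsto_finset_sum _ fun j _ => ?_)
      refine Tendsto.smul (tendsto_id.div_const _) (Tendsto.add ?_ ?_)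
      · exact Tendsto.smul (((tendsto_id.sub_const _).inv₀ (sub_ne_zero.mpr (hne_c i j))))
          tendsto_const_nhds
      · have : μ i + starRingEnd ℂ (μ j) ≠ 0 := by
          intro h
          exact hne_nc i j (by linear_combination h)
        exact Tendsto.smul ((tendsto_id.add_const _).inv₀ this) tendsto_const_nhds
    exact (h1.mono_left (nhdsWithin_le_nhds (s := S))).congr fun lam => (hghat lam).symm
  -- tendsto of (lam - μ i) • g lam
  set φ : ℂ → Matrix (Fin m ⊕ Fin n) (Fin m ⊕ Fin n) ℂ := fun lam => (lam - μ i) • (1 : Matrix (Fin m ⊕ Fin n) (Fin m ⊕ Fin n) ℂ) + ∑ j, (lam / μ j) •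
      ((if j = i then (1:ℂ) else (lam - μ i) * (lam - μ j)⁻¹) • B j
        + ((lam - μ i) * (lam + μ j)⁻¹) • (C * B j * C)) with hφ
  have hfeq : ∀ lam ∈ S, (lam - μ i) • g lam = φ lam := by
    intro lam hl
    rw [hg, hφ, smul_add, Finset.smul_sum]
    congr 1
    refine Finset.sum_congr rfl fun j _ => ?_
    rw [smul_comm, smul_add, smul_smul, smul_smul]
    congr 2
    by_cases hji : j = i
    · subst hji
      rw [if_pos rfl]
      rw [mul_inv_cancel₀ (sub_ne_zero.mpr ((hSgood lam hl j).1))]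
    · rw [if_neg hji]
  have hφB : φ (μ i) = B i := by
    rw [hφ]
    simp only [sub_self, zero_mul, zero_smul, add_zero, zero_add]
    rw [Finset.sum_eq_single i]
    · simp [div_self (hμ0 i)]
    · intro j _ hj
      rw [if_neg hj]
      simp
    · intro h
      exact absurd (Finset.mem_univ i) h
  have hφt : Tendsto φ (𝓝 (μ i)) (𝓝 (B i)) := by
    rw [← hφB, hφ]
    refine Tendsto.add (Tendsto.smul (tendsto_id.sub_const _) tendsto_const_nhds)
      (tendsto_finset_sum _ fun j _ => ?_)
    refine Tendsto.smul (tendsto_id.div_const _) (Tendsto.add ?_ ?_)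
    · by_cases hji : j = i
      · simp only [hji, if_pos rfl]
        exact tendsto_const_nhds.smul tendsto_const_nhds
      · simp only [if_neg hji]
        have : μ i - μ j ≠ 0 := sub_ne_zero.mpr fun h => hji (hinj i j h).symm
        exact Tendsto.smul ((tendsto_id.sub_const _).mul ((tendsto_id.sub_const _).inv₀ this))
          tendsto_const_nhds
    · have : μ i + μ j ≠ 0 := fun h => hne_neg i j (by linear_combination h)
      exact Tendsto.smul ((tendsto_id.sub_const _).mul ((tendsto_id.add_const _).inv₀ this))
        tendsto_const_nhds
  have hf : Tendsto (fun lam => (lam - μ i) • g lam) (𝓝[S] μ i) (𝓝 (B i)) :=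
    (hφt.mono_left (nhdsWithin_le_nhds (s := S))).congr' (by
      filter_upwards [self_mem_nhdsWithin] with lam hl
      exact (hfeq lam hl).symm)
  -- combine
  have hprod : Tendsto (fun lam => ((lam - μ i) • g lam) * (E * (g (starRingEnd ℂ lam))ᴴ * E))
      (𝓝[S] μ i) (𝓝 (B i * M)) := hf.mul hψ
  have hzero : Tendsto (fun lam => ((lam - μ i) • g lam) * (E * (g (starRingEnd ℂ lam))ᴴ * E))
      (𝓝[S] μ i) (𝓝 0) := by
    have h0 : Tendsto (fun lam : ℂ => (lam - μ i) • (1 : Matrix (Fin m ⊕ Fin n) (Fin m ⊕ Fin n) ℂ)) (𝓝[S] μ i) (𝓝 0) := by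
      have h0' : Tendsto (fun lam : ℂ => (lam - μ i) • (1 : Matrix (Fin m ⊕ Fin n) (Fin m ⊕ Fin n) ℂ))
          (𝓝 (μ i)) (𝓝 ((μ i - μ i) • (1 : Matrix (Fin m ⊕ Fin n) (Fin m ⊕ Fin n) ℂ))) :=
        (tendsto_id.sub_const (μ i)).smul tendsto_const_nhds
      rw [sub_self, zero_smul] at h0'
      exact h0'.mono_left (nhdsWithin_le_nhds (s := S))
    refine h0.congr' ?_
    filter_upwards [self_mem_nhdsWithin] with lam hl
    rw [Matrix.smul_mul, hunit lam (hSgood lam hl)]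
  have := tendsto_nhds_unique hprod hzero
  exact this
end
end

section
/- Let N = m+n for positive integers m, n, let C = diag(𝟙ₘ, −𝟙ₙ) and 𝓔 = diag(ε₁,…,ε_N) with εₚ ∈ {+1,−1}. Let μ₁,…,μ_r be nonzero real numbers with |μ₁|,…,|μ_r| pairwise distinct, and let B₁,…,B_r ∈ M_N(ℂ). Define g(λ) = 𝟙 + Σ_{j=1}^r (λ/μ_j)(B_j/(λ−μ_j) + C B_j C/(λ+μ_j)) and ĝ(λ) = 𝓔 g(conj(λ))† 𝓔. If g(λ) ĝ(λ) = 𝟙 for every λ ∈ ℂ outside the pole set {±μ_j}, then B_i 𝓔 B_i† = 0 for every i = 1,…,r. -/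
/-!
Approach the pole `μᵢ` along the real line. There `conj λ = λ`, so `𝓔 g(conj λ)† 𝓔` is again a
dressing factor with the same poles, and its residue at `μᵢ` is `𝓔 Bᵢ† 𝓔`, while that of `g` is
`Bᵢ`. Hence `(λ - μᵢ) g(λ) · (λ - μᵢ) ĝ(λ)` tends to `Bᵢ 𝓔 Bᵢ† 𝓔`; but it equals `(λ - μᵢ)² 𝟙`,
which tends to `0`. Since `𝓔² = 𝟙`, this gives `Bᵢ 𝓔 Bᵢ† = 0`.
-/

noncomputable section

open Matrix Filter Topology

theorem Emat_mul_self {m n : ℕ} {ε : Fin m ⊕ Fin n → ℝ} (hε : ∀ p, ε p = 1 ∨ ε p = -1) :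
    Emat ε * Emat ε = 1 := by
  rw [Emat, diagonal_mul_diagonal, ← diagonal_one]
  congr 1
  funext p
  rcases hε p with h | h <;> simp [h]

theorem eventually_nhdsNE_ne {X : Type*} [TopologicalSpace X] [T1Space X] (a b : X) :
    ∀ᶠ x in 𝓝[≠] a, x ≠ b := by
  rcases eq_or_ne a b with rfl | h
  · exact eventually_mem_nhdsWithin
  · exact eventually_ne_nhdsWithin h

/-- If `f` and `h` are mutually inverse and both have a simple pole along `l` (`c → 0` being the
local parameter), their residues `X` and `Y` satisfy `X * Y = 0`. -/
theorem mul_eq_zero_of_tendsto_smul_of_mul_eq_one {α 𝕜 A : Type*} [NormedField 𝕜] [Ring A]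
    [Algebra 𝕜 A] [TopologicalSpace A] [ContinuousMul A] [ContinuousSMul 𝕜 A] [T2Space A]
    {l : Filter α} [l.NeBot] {c : α → 𝕜} {f h : α → A} {X Y : A} (hc : Tendsto c l (𝓝 0))
    (hf : Tendsto (fun x => c x • f x) l (𝓝 X)) (hh : Tendsto (fun x => c x • h x) l (𝓝 Y))
    (hfh : ∀ᶠ x in l, f x * h x = 1) : X * Y = 0 := by
  have hsq : Tendsto (fun x => (c x * c x) • (1 : A)) l (𝓝 0) := by
    simpa using (hc.mul hc).smul_const (1 : A)
  refine tendsto_nhds_unique (hf.mul hh) (hsq.congr' (hfh.mono fun x hx => ?_))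
  dsimp only
  rw [smul_mul_smul_comm, hx]

section DressingFactor

variable {A : Type*} [Ring A] [Algebra ℂ A] {r : ℕ}

/-- The function `1 + Σⱼ (z/μⱼ)(Mⱼ/(z-μⱼ) + Pⱼ/(z+μⱼ))`; the paper's `g` is
`dressingFactor μ B (fun j => C * B j * C)`. -/
def dressingFactor (μ : Fin r → ℂ) (M P : Fin r → A) (z : ℂ) : A :=
  1 + ∑ j, (z / μ j) • ((z - μ j)⁻¹ • M j + (z + μ j)⁻¹ • P j)

theorem smul_dressingFactor (c : ℂ) (μ : Fin r → ℂ) (M P : Fin r → A) (z : ℂ) :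
    c • dressingFactor μ M P z = c • 1 + ∑ j,
      ((c * (z / μ j) * (z - μ j)⁻¹) • M j + (c * (z / μ j) * (z + μ j)⁻¹) • P j) := by
  simp only [dressingFactor, smul_add, Finset.smul_sum, smul_smul, mul_assoc]

theorem mul_dressingFactor_mul {E : A} (hE : E * E = 1) (μ : Fin r → ℂ) (M P : Fin r → A)
    (z : ℂ) : E * dressingFactor μ M P z * E =
      dressingFactor μ (fun j => E * M j * E) (fun j => E * P j * E) z := by
  simp only [dressingFactor, mul_add, add_mul, Finset.mul_sum, Finset.sum_mul, mul_one, hE,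
    mul_smul_comm, smul_mul_assoc]

theorem star_dressingFactor_ofReal [StarRing A] [StarModule ℂ A] (μ : Fin r → ℝ)
    (M P : Fin r → A) (t : ℝ) :
    star (dressingFactor (fun j => (μ j : ℂ)) M P t) =
      dressingFactor (fun j => (μ j : ℂ)) (star M) (star P) t := by
  simp only [dressingFactor, star_add, star_one, star_sum, star_smul, Pi.star_apply]
  simp [← Complex.ofReal_sub, ← Complex.ofReal_add, ← Complex.ofReal_div, ← Complex.ofReal_inv]

variable [TopologicalSpace A] [ContinuousAdd A] [ContinuousSMul ℂ A]

theorem tendsto_sub_smul_dressingFactor (μ : Fin r → ℂ) (M P : Fin r → A) {i : Fin r}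
    (hμ : μ i ≠ 0) (hpole : ∀ j, j ≠ i → μ j ≠ μ i ∧ μ j ≠ -μ i) :
    Tendsto (fun z => (z - μ i) • dressingFactor μ M P z) (𝓝[≠] μ i) (𝓝 (M i)) := by
  have hsub : Tendsto (fun z => z - μ i) (𝓝[≠] μ i) (𝓝 0) :=
    tendsto_sub_nhds_zero_iff.2 nhdsWithin_le_nhds
  have hvanish {f : ℂ → ℂ} (hf : ContinuousAt f (μ i)) :
      Tendsto (fun z => (z - μ i) * f z) (𝓝[≠] μ i) (𝓝 0) := by
    simpa using hsub.mul (hf.tendsto.mono_left nhdsWithin_le_nhds)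
  have hM : ∀ j, Tendsto (fun z => (z - μ i) * (z / μ j) * (z - μ j)⁻¹) (𝓝[≠] μ i)
      (𝓝 (if j = i then 1 else 0)) := by
    intro j
    split_ifs with hj
    · subst hj
      have hdiv : Tendsto (fun z => z / μ j) (𝓝[≠] μ j) (𝓝 1) := by
        simpa [div_self hμ] using
          ((continuous_id.div_const (μ j)).tendsto (μ j)).mono_left nhdsWithin_le_nhds
      refine hdiv.congr' (eventually_nhdsWithin_of_forall fun z hz => ?_)
      dsimp only
      rw [mul_right_comm, mul_inv_cancel₀ (sub_ne_zero.2 hz), one_mul]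
    · have : μ i - μ j ≠ 0 := sub_ne_zero.2 (hpole j hj).1.symm
      simp_rw [mul_assoc]
      exact hvanish (by fun_prop (disch := assumption))
  have hP : ∀ j, Tendsto (fun z => (z - μ i) * (z / μ j) * (z + μ j)⁻¹) (𝓝[≠] μ i)
      (𝓝 0) := by
    intro j
    have : μ i + μ j ≠ 0 := by
      rcases eq_or_ne j i with rfl | hj
      · simpa [← two_mul] using hμ
      · exact fun h => (hpole j hj).2 (by linear_combination h)
    simp_rw [mul_assoc]
    exact hvanish (by fun_prop (disch := assumption))
  have hone : Tendsto (fun z => (z - μ i) • (1 : A)) (𝓝[≠] μ i) (𝓝 0) := by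
    simpa using hsub.smul_const (1 : A)
  simp_rw [smul_dressingFactor]
  convert hone.add (tendsto_finsetSum _ fun j _ =>
    ((hM j).smul_const (M j)).add ((hP j).smul_const (P j))) using 2
  simp [ite_smul]

end DressingFactor

theorem real_pole_double_pole_relation_general {m n r : ℕ}
    (ε : Fin m ⊕ Fin n → ℝ) (hε : ∀ p, ε p = 1 ∨ ε p = -1)
    (μ : Fin r → ℝ) (hμ0 : ∀ j, μ j ≠ 0)
    (hdist : ∀ i j, |μ i| = |μ j| → i = j)
    (B : Fin r → Matrix (Fin m ⊕ Fin n) (Fin m ⊕ Fin n) ℂ)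
    (g : ℂ → Matrix (Fin m ⊕ Fin n) (Fin m ⊕ Fin n) ℂ)
    (hg : ∀ lam, g lam = 1 + ∑ j, (lam / (μ j : ℂ)) •
        ((lam - (μ j : ℂ))⁻¹ • B j + (lam + (μ j : ℂ))⁻¹ • (Cmat m n * B j * Cmat m n)))
    (hunit : ∀ lam : ℂ, (∀ j, lam ≠ (μ j : ℂ) ∧ lam ≠ -(μ j : ℂ)) →
      g lam * (Emat ε * (g (starRingEnd ℂ lam))ᴴ * Emat ε) = 1) :
    ∀ i, B i * Emat ε * (B i)ᴴ = 0 := by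
  intro i
  set E := Emat ε
  have hE : E * E = 1 := Emat_mul_self hε
  have hpole : ∀ j, j ≠ i → (μ j : ℂ) ≠ μ i ∧ (μ j : ℂ) ≠ -μ i := fun j hj => by
    exact_mod_cast not_or.1 (abs_eq_abs.not.1 (mt (hdist j i) hj))
  have hg' : g = dressingFactor (fun j => (μ j : ℂ)) B (fun j => Cmat m n * B j * Cmat m n) :=
    funext hg
  have hĝ : ∀ t : ℝ, E * (g (starRingEnd ℂ t))ᴴ * E = dressingFactor (fun j => (μ j : ℂ))
      (fun j => E * (B j)ᴴ * E) (fun j => E * (Cmat m n * B j * Cmat m n)ᴴ * E) t := fun t => by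
    rw [Complex.conj_ofReal, hg', ← star_eq_conjTranspose, star_dressingFactor_ofReal,
      mul_dressingFactor_mul hE]
    rfl
  have hreal : Tendsto (fun t : ℝ => (t : ℂ)) (𝓝[≠] μ i) (𝓝[≠] (μ i : ℂ)) :=
    Complex.continuous_ofReal.continuousWithinAt.tendsto_nhdsWithin fun _ h => by simpa using h
  have hres (M P : Fin r → Matrix (Fin m ⊕ Fin n) (Fin m ⊕ Fin n) ℂ) :
      Tendsto (fun t : ℝ => ((t : ℂ) - μ i) • dressingFactor (fun j => (μ j : ℂ)) M P t)
        (𝓝[≠] μ i) (𝓝 (M i)) :=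
    (tendsto_sub_smul_dressingFactor _ M P (by exact_mod_cast hμ0 i) hpole).comp hreal
  have hoff : ∀ᶠ t : ℝ in 𝓝[≠] μ i, ∀ j, (t : ℂ) ≠ μ j ∧ (t : ℂ) ≠ -μ j :=
    hreal.eventually (eventually_all.2 fun j =>
      (eventually_nhdsNE_ne _ _).and (eventually_nhdsNE_ne _ _))
  have hzero : B i * (E * (B i)ᴴ * E) = 0 :=
    mul_eq_zero_of_tendsto_smul_of_mul_eq_one
      (tendsto_sub_nhds_zero_iff.2 (tendsto_nhdsWithin_iff.1 hreal).1)
      (by rw [hg']; exact hres _ _) (by simp_rw [hĝ]; exact hres _ _)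
      (hoff.mono fun t => hunit t)
  calc B i * E * (B i)ᴴ = B i * (E * (B i)ᴴ * E) * E := by simp only [mul_assoc, hE, mul_one]
    _ = 0 := by rw [hzero, zero_mul]

/-- Degenerate case, real poles: if the dressing factor
`g(λ) = 𝟙 + Σⱼ (λ/μⱼ)(Bⱼ/(λ-μⱼ) + CBⱼC/(λ+μⱼ))` with nonzero real poles `±μⱼ` of
pairwise distinct absolute values satisfies `g(λ) 𝓔 g(λ*)† 𝓔 = 𝟙` away from the poles,
then the double-pole coefficients give `Bᵢ 𝓔 Bᵢ† = 0`. -/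
theorem real_pole_double_pole_relation {m n r : ℕ} (hm : 0 < m) (hn : 0 < n) (hr : 0 < r)
    (ε : Fin m ⊕ Fin n → ℝ) (hε : ∀ p, ε p = 1 ∨ ε p = -1)
    (μ : Fin r → ℝ) (hμ0 : ∀ j, μ j ≠ 0)
    (hdist : ∀ i j, |μ i| = |μ j| → i = j)
    (B : Fin r → Matrix (Fin m ⊕ Fin n) (Fin m ⊕ Fin n) ℂ)
    (g : ℂ → Matrix (Fin m ⊕ Fin n) (Fin m ⊕ Fin n) ℂ)
    (hg : ∀ lam, g lam = 1 + ∑ j, (lam / (μ j : ℂ)) •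
        ((lam - (μ j : ℂ))⁻¹ • B j + (lam + (μ j : ℂ))⁻¹ • (Cmat m n * B j * Cmat m n)))
    (hunit : ∀ lam : ℂ, (∀ j, lam ≠ (μ j : ℂ) ∧ lam ≠ -(μ j : ℂ)) →
      g lam * (Emat ε * (g (starRingEnd ℂ lam))ᴴ * Emat ε) = 1) :
    ∀ i, B i * Emat ε * (B i)ᴴ = 0 :=
  real_pole_double_pole_relation_general ε hε μ hμ0 hdist B g hg hunit
end
end

section
/- Let N = m+n for positive integers m, n, let C = diag(𝟙ₘ, −𝟙ₙ) and 𝓔 = diag(ε₁,…,ε_N) with εₚ ∈ {+1,−1}. Let μ₁,…,μ_r be nonzero real numbers with |μ₁|,…,|μ_r| pairwise distinct, and let B₁,…,B_r ∈ M_N(ℂ). Define g(λ) = 𝟙 + Σ_{j=1}^r (λ/μ_j)(B_j/(λ−μ_j) + C B_j C/(λ+μ_j)), ĝ(λ) = 𝓔 g(conj(λ))† 𝓔, and for each i set Ω_i = 𝟙 + Σ_{j≠i} μ_i B_j/(μ_j(μ_i − μ_j)) + Σ_{j=1}^r μ_i C B_j C/(μ_j(μ_i + μ_j)). If g(λ)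 ĝ(λ) = 𝟙 for every λ ∈ ℂ outside the pole set {±μ_j}, then for every i = 1,…,r: Ω_i 𝓔 B_i† 𝓔 + B_i 𝓔 Ω_i† 𝓔 = 0. -/
noncomputable section

open Matrix

/-- The regular part `Ωᵢ = 𝟙 + Σ_{j≠i} μᵢBⱼ/(μⱼ(μᵢ-μⱼ)) + Σⱼ μᵢCBⱼC/(μⱼ(μᵢ+μⱼ))`
associated to the pole `μᵢ` of the dressing factor. -/
def Omega {m n r : ℕ} (μ : Fin r → ℂ) (B : Fin r → Matrix (Fin m ⊕ Fin n) (Fin m ⊕ Fin n) ℂ)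
    (i : Fin r) : Matrix (Fin m ⊕ Fin n) (Fin m ⊕ Fin n) ℂ :=
  1 + ∑ j ∈ Finset.univ.erase i, (μ i / (μ j * (μ i - μ j))) • B j
    + ∑ j, (μ i / (μ j * (μ i + μ j))) • (Cmat m n * B j * Cmat m n)

namespace RealPoleAux

variable {m n r : ℕ} (ε : Fin m ⊕ Fin n → ℝ) (μ : Fin r → ℝ)
  (B : Fin r → Matrix (Fin m ⊕ Fin n) (Fin m ⊕ Fin n) ℂ) (i : Fin r)

lemma Cmat_diag : Cmat m n = Matrix.diagonal ((fun _ => (1:ℂ)) ⊕ᵥ (fun _ => (-1:ℂ))) := by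
  ext (p | p) (q | q) <;>
    simp [Cmat, Matrix.fromBlocks, Matrix.diagonal_apply, Matrix.one_apply] <;> aesop

lemma EE (hε : ∀ p, ε p = 1 ∨ ε p = -1) : Emat ε * Emat ε = 1 := by
  rw [Emat, Matrix.diagonal_mul_diagonal]
  have : (fun p => (ε p : ℂ) * (ε p : ℂ)) = fun _ => 1 :=
    funext fun p => by rcases hε p with h | h <;> norm_num [h]
  rw [this, Matrix.diagonal_one]

lemma CH : (Cmat m n)ᴴ = Cmat m n := by
  rw [Cmat, Matrix.fromBlocks_conjTranspose]
  norm_num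

lemma EC : Emat ε * Cmat m n = Cmat m n * Emat ε := by
  rw [Cmat_diag, Emat, Matrix.diagonal_mul_diagonal, Matrix.diagonal_mul_diagonal]
  exact congrArg Matrix.diagonal (funext fun p => mul_comm _ _)

lemma sandwich (M : Matrix (Fin m ⊕ Fin n) (Fin m ⊕ Fin n) ℂ) :
    Emat ε * (Cmat m n * M * Cmat m n) * Emat ε
      = Cmat m n * (Emat ε * M * Emat ε) * Cmat m n := by
  have h1 : Emat ε * (Cmat m n * M * Cmat m n) * Emat ε
      = Emat ε * Cmat m n * (M * (Cmat m n * Emat ε)) := by simp only [mul_assoc]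
  have h2 : Cmat m n * (Emat ε * M * Emat ε) * Cmat m n
      = Cmat m n * Emat ε * (M * (Emat ε * Cmat m n)) := by simp only [mul_assoc]
  rw [h1, h2, EC]

/-- the regular part of the dressing factor at the pole `μ i` -/
def regpart (lam : ℂ) : Matrix (Fin m ⊕ Fin n) (Fin m ⊕ Fin n) ℂ :=
  1 + ∑ j ∈ Finset.univ.erase i, (lam / (μ j : ℂ) * (lam - (μ j : ℂ))⁻¹) • B j
    + ∑ j, (lam / (μ j : ℂ) * (lam + (μ j : ℂ))⁻¹) • (Cmat m n * B j * Cmat m n)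

/-- value of the regular part at the pole equals `Omega` -/
lemma regpart_at_pole : regpart μ B i ((μ i : ℂ)) = Omega (fun j => ((μ j : ℂ))) B i := by
  rw [regpart, Omega]
  congr 1
  · congr 1
    apply Finset.sum_congr rfl
    intro j _
    rw [← div_eq_mul_inv, div_div]
  · apply Finset.sum_congr rfl
    intro j _
    rw [← div_eq_mul_inv, div_div]

/-- splitting of the dressing factor into regular part plus pole term -/
lemma g_split (lam : ℂ) :
    1 + ∑ j, (lam / (μ j : ℂ)) •
        ((lam - (μ j : ℂ))⁻¹ • B j + (lam + (μ j : ℂ))⁻¹ • (Cmat m n * B j * Cmat m n))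
      = regpart μ B i lam + (lam / (μ i : ℂ) * (lam - (μ i : ℂ))⁻¹) • B i := by
  simp only [smul_add, smul_smul, Finset.sum_add_distrib, regpart]
  rw [← Finset.sum_erase_add _ _ (Finset.mem_univ i)]
  abel

/-- continuity of the regular part where the denominators don't vanish -/
lemma regpart_continuousAt {c : ℂ} (h1 : ∀ j, j ∈ Finset.univ.erase i → c - (μ j : ℂ) ≠ 0)
    (h2 : ∀ j, c + (μ j : ℂ) ≠ 0) : ContinuousAt (regpart μ B i) c := by
  have hsum1 : ContinuousAt (fun lam : ℂ => ∑ j ∈ Finset.univ.erase i,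
      (lam / (μ j : ℂ) * (lam - (μ j : ℂ))⁻¹) • B j) c := by
    apply tendsto_finset_sum
    intro j hj
    exact (((continuousAt_id.div_const _).mul
      ((continuousAt_id.sub continuousAt_const).inv₀ (h1 j hj))).smul continuousAt_const).tendsto
  have hsum2 : ContinuousAt (fun lam : ℂ => ∑ j,
      (lam / (μ j : ℂ) * (lam + (μ j : ℂ))⁻¹) • (Cmat m n * B j * Cmat m n)) c := by
    apply tendsto_finset_sum
    intro j _
    exact (((continuousAt_id.div_const _).mul
      ((continuousAt_id.add continuousAt_const).inv₀ (h2 j))).smul continuousAt_const).tendsto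
  exact (continuousAt_const.add hsum1).add hsum2

set_option maxHeartbeats 1000000 in
/-- conjugation formula: `𝓔 g(λ̄)† 𝓔` has the same form with `Bⱼ` replaced by `𝓔Bⱼ†𝓔`. -/
lemma ghat_formula (hε : ∀ p, ε p = 1 ∨ ε p = -1) (lam : ℂ) :
    Emat ε * (1 + ∑ j, ((starRingEnd ℂ lam) / (μ j : ℂ)) •
        (((starRingEnd ℂ lam) - (μ j : ℂ))⁻¹ • B j +
         ((starRingEnd ℂ lam) + (μ j : ℂ))⁻¹ • (Cmat m n * B j * Cmat m n)))ᴴ * Emat ε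
      = 1 + ∑ j, (lam / (μ j : ℂ)) •
        ((lam - (μ j : ℂ))⁻¹ • (Emat ε * (B j)ᴴ * Emat ε) +
         (lam + (μ j : ℂ))⁻¹ • (Cmat m n * (Emat ε * (B j)ᴴ * Emat ε) * Cmat m n)) := by
  simp only [conjTranspose_add, conjTranspose_one, conjTranspose_sum, conjTranspose_smul,
    conjTranspose_mul, CH, star_div₀, star_inv₀, star_sub, star_add, RCLike.star_def,
    Complex.conj_conj, Complex.conj_ofReal, smul_add]
  simp only [Matrix.mul_add, Matrix.add_mul, Finset.mul_sum, Finset.sum_mul,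
    Matrix.mul_smul, Matrix.smul_mul, Matrix.mul_one, Matrix.one_mul, EE ε hε]
  congr 1
  apply Finset.sum_congr rfl
  intro j _
  congr 1
  rw [← sandwich]
  congr 1
  simp only [mul_assoc]

set_option maxHeartbeats 1000000 in
/-- conjugation formula for `Omega` -/
lemma Omega_conj (hε : ∀ p, ε p = 1 ∨ ε p = -1) :
    Emat ε * (Omega (fun j => ((μ j : ℂ))) B i)ᴴ * Emat ε
      = Omega (fun j => ((μ j : ℂ))) (fun j => Emat ε * (B j)ᴴ * Emat ε) i := by
  rw [Omega, Omega]
  simp only [conjTranspose_add, conjTranspose_one, conjTranspose_sum, conjTranspose_smul,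
    conjTranspose_mul, CH, star_div₀, star_inv₀, star_sub, star_add, star_mul',
    RCLike.star_def, Complex.conj_conj, Complex.conj_ofReal]
  simp only [Matrix.mul_add, Matrix.add_mul, Finset.mul_sum, Finset.sum_mul,
    Matrix.mul_smul, Matrix.smul_mul, Matrix.mul_one, Matrix.one_mul, EE ε hε]
  congr 1
  apply Finset.sum_congr rfl
  intro j _
  congr 1
  rw [← sandwich]
  congr 1
  simp only [mul_assoc]

/-- a function continuous at `c` vanishing on a dense set vanishes at `c` -/
lemma vanish {X : Type*} [TopologicalSpace X] [T2Space X] [Zero X]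
    {f : ℂ → X} {S : Set ℂ} {c : ℂ} (hd : Dense S)
    (hc : ContinuousAt f c) (h0 : ∀ x ∈ S, f x = 0) : f c = 0 := by
  have hne : (nhdsWithin c S).NeBot := mem_closure_iff_nhdsWithin_neBot.mp (hd c)
  have h1 : Filter.Tendsto f (nhdsWithin c S) (nhds (f c)) := hc.continuousWithinAt.tendsto
  have h2 : Filter.Tendsto f (nhdsWithin c S) (nhds 0) := by
    refine Filter.Tendsto.congr' ?_ tendsto_const_nhds
    filter_upwards [self_mem_nhdsWithin] with x hx using (h0 x hx).symm
  exact tendsto_nhds_unique h1 h2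

end RealPoleAux

open RealPoleAux in
/-- Degenerate case, real poles: the simple-pole coefficient of `g ĝ = 𝟙` at `λ = μᵢ`
gives `Ωᵢ 𝓔 Bᵢ† 𝓔 + Bᵢ 𝓔 Ωᵢ† 𝓔 = 0`. -/
theorem real_pole_simple_pole_relation {m n r : ℕ} (hm : 0 < m) (hn : 0 < n) (hr : 0 < r)
    (ε : Fin m ⊕ Fin n → ℝ) (hε : ∀ p, ε p = 1 ∨ ε p = -1)
    (μ : Fin r → ℝ) (hμ0 : ∀ j, μ j ≠ 0)
    (hdist : ∀ i j, |μ i| = |μ j| → i = j)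
    (B : Fin r → Matrix (Fin m ⊕ Fin n) (Fin m ⊕ Fin n) ℂ)
    (g : ℂ → Matrix (Fin m ⊕ Fin n) (Fin m ⊕ Fin n) ℂ)
    (hg : ∀ lam, g lam = 1 + ∑ j, (lam / (μ j : ℂ)) •
        ((lam - (μ j : ℂ))⁻¹ • B j + (lam + (μ j : ℂ))⁻¹ • (Cmat m n * B j * Cmat m n)))
    (hunit : ∀ lam : ℂ, (∀ j, lam ≠ (μ j : ℂ) ∧ lam ≠ -(μ j : ℂ)) →
      g lam * (Emat ε * (g (starRingEnd ℂ lam))ᴴ * Emat ε) = 1) :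
    ∀ i, Omega (fun j => ((μ j : ℂ))) B i * Emat ε * (B i)ᴴ * Emat ε
        + B i * Emat ε * (Omega (fun j => ((μ j : ℂ))) B i)ᴴ * Emat ε = 0 := by
  intro i
  -- notation
  set c : ℂ := (μ i : ℂ) with hcdef
  set Bh : Fin r → Matrix (Fin m ⊕ Fin n) (Fin m ⊕ Fin n) ℂ :=
    fun j => Emat ε * (B j)ᴴ * Emat ε with hBh
  -- scalar nonvanishing facts
  have hμc : ∀ j, (μ j : ℂ) ≠ 0 := fun j => Complex.ofReal_ne_zero.mpr (hμ0 j)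
  have hc0 : c ≠ 0 := hμc i
  have hsubne : ∀ j ∈ Finset.univ.erase i, c - (μ j : ℂ) ≠ 0 := by
    intro j hj
    have hji : j ≠ i := Finset.ne_of_mem_erase hj
    rw [sub_ne_zero]
    intro h
    rw [hcdef] at h
    have : μ i = μ j := by exact_mod_cast h
    exact hji (hdist j i (by rw [this]))
  have haddne : ∀ j, c + (μ j : ℂ) ≠ 0 := by
    intro j h
    rw [hcdef] at h
    have : μ i + μ j = 0 := by exact_mod_cast h
    have habs : |μ i| = |μ j| := by
      have : μ i = -μ j := by linarith
      rw [this, abs_neg]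
    have := hdist i j habs
    subst this
    exact hμ0 i (by linarith)
  -- the dense set avoiding all poles
  set S : Set ℂ := {lam : ℂ | ∀ j, lam ≠ (μ j : ℂ) ∧ lam ≠ -(μ j : ℂ)} with hSdef
  have hSd : Dense S := by
    have hSc : S = (⋃ j, {(μ j : ℂ), -(μ j : ℂ)})ᶜ := by
      ext lam
      simp [hSdef, not_or]
    rw [hSc]
    exact Set.Countable.dense_compl ℂ
      (Set.countable_iUnion fun j => (Set.countable_singleton _).insert _)
  have hmemS : ∀ lam ∈ S, (lam - c ≠ 0) ∧ (∀ j, lam - (μ j : ℂ) ≠ 0) ∧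
      (∀ j, lam + (μ j : ℂ) ≠ 0) := by
    intro lam hl
    exact ⟨sub_ne_zero.mpr (hl i).1, fun j => sub_ne_zero.mpr (hl j).1,
      fun j => by have := (hl j).2; intro h; exact this (by linear_combination h)⟩
  -- splitting of g and ĝ
  have hgsplit : ∀ lam, g lam = regpart μ B i lam + (lam / c * (lam - c)⁻¹) • B i := by
    intro lam
    rw [hg]
    exact g_split μ B i lam
  have hghsplit : ∀ lam, Emat ε * (g (starRingEnd ℂ lam))ᴴ * Emat ε
      = regpart μ Bh i lam + (lam / c * (lam - c)⁻¹) • Bh i := by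
    intro lam
    rw [hg (starRingEnd ℂ lam), ghat_formula ε μ B hε lam]
    exact g_split μ Bh i lam
  -- continuity of the regular parts at c
  have hcP : ContinuousAt (regpart μ B i) c := regpart_continuousAt μ B i hsubne haddne
  have hcQ : ContinuousAt (regpart μ Bh i) c := regpart_continuousAt μ Bh i hsubne haddne
  -- step 1 : B i * Bh i = 0
  have hA : B i * Bh i = 0 := by
    have hv := vanish (f := fun lam : ℂ =>
        (lam / c * (lam / c)) • (B i * Bh i)
        + ((lam - c) * (lam / c)) • (B i * regpart μ Bh i lam + regpart μ B i lam * Bh i)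
        + ((lam - c) * (lam - c)) • (regpart μ B i lam * regpart μ Bh i lam - 1)) (c := c) hSd ?_ ?_
    · have := hv
      simp only [div_self hc0, sub_self, one_mul, zero_mul, mul_zero, one_smul, zero_smul,
        add_zero] at this
      exact this
    · refine ContinuousAt.add (ContinuousAt.add ?_ ?_) ?_
      · exact (((continuousAt_id.div_const _).mul (continuousAt_id.div_const _)).smul
          continuousAt_const)
      · exact (((continuousAt_id.sub continuousAt_const).mul
          (continuousAt_id.div_const _)).smul
          ((continuousAt_const.mul hcQ).add (hcP.mul continuousAt_const)))
      · exact (((continuousAt_id.sub continuousAt_const).mul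
          (continuousAt_id.sub continuousAt_const)).smul ((hcP.mul hcQ).sub continuousAt_const))
    · intro lam hl
      obtain ⟨hne, -, -⟩ := hmemS lam hl
      have hu := hunit lam hl
      rw [hgsplit lam, hghsplit lam] at hu
      have expand : (lam / c * (lam / c)) • (B i * Bh i)
          + ((lam - c) * (lam / c)) • (B i * regpart μ Bh i lam + regpart μ B i lam * Bh i)
          + ((lam - c) * (lam - c)) • (regpart μ B i lam * regpart μ Bh i lam - 1)
          = ((lam - c) * (lam - c)) •
            ((regpart μ B i lam + (lam / c * (lam - c)⁻¹) • B i)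
              * (regpart μ Bh i lam + (lam / c * (lam - c)⁻¹) • Bh i) - 1) := by
        simp only [Matrix.mul_add, Matrix.add_mul, Matrix.smul_mul, Matrix.mul_smul,
          smul_smul, smul_sub, smul_add]
        match_scalars <;> field_simp <;> ring
      rw [hu, sub_self, smul_zero] at expand
      exact expand
  -- step 2 : the simple pole coefficient
  have hS2 : B i * regpart μ Bh i c + regpart μ B i c * Bh i = 0 := by
    have hv := vanish (f := fun lam : ℂ =>
        (lam / c) • (B i * regpart μ Bh i lam + regpart μ B i lam * Bh i)
        + (lam - c) • (regpart μ B i lam * regpart μ Bh i lam - 1)) (c := c) hSd ?_ ?_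
    · have := hv
      simp only [div_self hc0, sub_self, one_smul, zero_smul, add_zero] at this
      exact this
    · refine ContinuousAt.add ?_ ?_
      · exact ((continuousAt_id.div_const _).smul
          ((continuousAt_const.mul hcQ).add (hcP.mul continuousAt_const)))
      · exact ((continuousAt_id.sub continuousAt_const).smul
          ((hcP.mul hcQ).sub continuousAt_const))
    · intro lam hl
      obtain ⟨hne, -, -⟩ := hmemS lam hl
      have hu := hunit lam hl
      rw [hgsplit lam, hghsplit lam] at hu
      have expand : (lam / c) • (B i * regpart μ Bh i lam + regpart μ B i lam * Bh i)
          + (lam - c) • (regpart μ B i lam * regpart μ Bh i lam - 1)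
          = (lam - c) •
            ((regpart μ B i lam + (lam / c * (lam - c)⁻¹) • B i)
              * (regpart μ Bh i lam + (lam / c * (lam - c)⁻¹) • Bh i) - 1) := by
        simp only [Matrix.mul_add, Matrix.add_mul, Matrix.smul_mul, Matrix.mul_smul,
          smul_smul, smul_sub, smul_add, hA, smul_zero]
        rw [add_zero]
        match_scalars <;> field_simp <;> ring
      rw [hu, sub_self, smul_zero] at expand
      exact expand
  -- conclude
  rw [regpart_at_pole μ B i, regpart_at_pole μ Bh i] at hS2
  have hfinal : Omega (fun j => ((μ j : ℂ))) B i * Bh i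
      + B i * Omega (fun j => ((μ j : ℂ))) Bh i = 0 := by
    rw [add_comm]; exact hS2
  rw [← Omega_conj ε μ B i hε] at hfinal
  have hg1 : Omega (fun j => ((μ j : ℂ))) B i * Emat ε * (B i)ᴴ * Emat ε
      = Omega (fun j => ((μ j : ℂ))) B i * Bh i := by
    rw [hBh]; simp only [mul_assoc]
  have hg2 : B i * Emat ε * (Omega (fun j => ((μ j : ℂ))) B i)ᴴ * Emat ε
      = B i * (Emat ε * (Omega (fun j => ((μ j : ℂ))) B i)ᴴ * Emat ε) := by
    simp only [mul_assoc]
  rw [hg1, hg2, hfinal]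
end
end

section
/- Fix N ≥ 1, μ ∈ ℝ, 𝓔 = diag(ε₁,…,ε_N) with εₚ ∈ {+1,−1}, a matrix J ∈ M_N(ℂ), and a continuous Q : ℝ → M_N(ℂ). Suppose Ψ, Φ : ℝ → M_N(ℂ) are differentiable, Ψ(x) is invertible for all x, and: (i) i Ψ′(x) + (μ Q(x) − μ² J) Ψ(x) = 0; (ii) i Φ′(x) + (Q(x) − 2μJ) Ψ(x) + (μ Q(x) − μ² J) Φ(x) = 0; (iii) 𝓔 Ψ(x)† 𝓔 = Ψ(x)⁻¹ for all x. Let F₀ ∈ ℂᴺ, define the row vector Fᵀ(x) = F₀ᵀ Ψ(x)⁻¹, and let α : ℝ → ℂ be differentiable with i α′(x) = Fᵀ(x) (Q(x) − 2μJ) 𝓔 conj(F(x)) for all x. Then the function x ↦ α(x) + Fᵀ(x) Φ(x) 𝓔 conj(F₀) is constant on ℝ. -/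
noncomputable section

open Matrix

/-- Entrywise derivative of a matrix-valued function on `ℝ`. -/
def matDeriv {N : ℕ} (M : ℝ → Matrix (Fin N) (Fin N) ℂ) (x : ℝ) : Matrix (Fin N) (Fin N) ℂ :=
  Matrix.of fun j k => deriv (fun y => M y j k) x

/-- Entrywise differentiability of a matrix-valued function on `ℝ`. -/
def MatDifferentiable {N : ℕ} (M : ℝ → Matrix (Fin N) (Fin N) ℂ) : Prop :=
  ∀ j k, Differentiable ℝ fun y => M y j k

/-!
Put `W = Ψ⁻¹Φ`. From the equations for `Ψ` and `Φ`, `W' = i Ψ⁻¹(Q - 2μJ)Ψ`: the terms with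
`μQ - μ²J` cancel, as in variation of constants. The reduction `𝓔Ψ†𝓔 = Ψ⁻¹` together with
`𝓔² = 1` gives `conj F = 𝓔Ψ𝓔 conj F₀`, hence `iα' = F₀ᵀ Ψ⁻¹(Q - 2μJ)Ψ 𝓔 conj F₀`. Since
`Fᵀ Φ 𝓔 conj F₀ = F₀ᵀ W 𝓔 conj F₀`, the function in question has derivative `α' + i · iα' = 0`.
-/

section MatDeriv

variable {N : ℕ} {M f g Ψ Φ : ℝ → Matrix (Fin N) (Fin N) ℂ}

theorem MatDifferentiable.hasDerivAt_apply (hM : MatDifferentiable M) (j k : Fin N) (x : ℝ) :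
    HasDerivAt (fun y => M y j k) (matDeriv M x j k) x :=
  (hM j k x).hasDerivAt

theorem MatDifferentiable.const (C : Matrix (Fin N) (Fin N) ℂ) :
    MatDifferentiable fun _ : ℝ => C :=
  fun _ _ => differentiable_const _

theorem MatDifferentiable.mul (hf : MatDifferentiable f) (hg : MatDifferentiable g) :
    MatDifferentiable fun y => f y * g y := fun j k => by
  simp only [mul_apply]
  exact Differentiable.fun_sum fun l _ => (hf j l).mul (hg l k)

theorem MatDifferentiable.conjTranspose (hM : MatDifferentiable M) :
    MatDifferentiable fun y => (M y)ᴴ := fun j k => by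
  simpa only [conjTranspose_apply] using (hM k j).star

theorem matDeriv_const (C : Matrix (Fin N) (Fin N) ℂ) (x : ℝ) :
    matDeriv (fun _ => C) x = 0 := by
  ext j k
  simp [matDeriv]

theorem matDeriv_mul (hf : MatDifferentiable f) (hg : MatDifferentiable g) (x : ℝ) :
    matDeriv (fun y => f y * g y) x = matDeriv f x * g x + f x * matDeriv g x := by
  ext j k
  have h : HasDerivAt (fun y => (f y * g y) j k)
      (∑ l, (matDeriv f x j l * g x l k + f x j l * matDeriv g x l k)) x := by
    simp only [mul_apply]
    exact HasDerivAt.fun_sum fun l _ =>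
      (hf.hasDerivAt_apply j l x).mul (hg.hasDerivAt_apply l k x)
  show deriv (fun y => (f y * g y) j k) x = _
  rw [h.deriv]
  simp [matDeriv, mul_apply, Finset.sum_add_distrib]

theorem matDeriv_inv (hM : MatDifferentiable M) (hMinv : MatDifferentiable fun y => (M y)⁻¹)
    (hunit : ∀ y, IsUnit (M y)) (x : ℝ) :
    matDeriv (fun y => (M y)⁻¹) x = -((M x)⁻¹ * matDeriv M x * (M x)⁻¹) := by
  have hinv_mul : (fun y => (M y)⁻¹ * M y) = fun _ => 1 :=
    funext fun y => nonsing_inv_mul _ ((isUnit_iff_isUnit_det _).1 (hunit y))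
  have hsum : matDeriv (fun y => (M y)⁻¹) x * M x + (M x)⁻¹ * matDeriv M x = 0 := by
    rw [← matDeriv_mul hMinv hM, hinv_mul, matDeriv_const]
  calc matDeriv (fun y => (M y)⁻¹) x
      = (matDeriv (fun y => (M y)⁻¹) x * M x) * (M x)⁻¹ := by
        rw [Matrix.mul_assoc, mul_nonsing_inv _ ((isUnit_iff_isUnit_det _).1 (hunit x)),
          Matrix.mul_one]
    _ = -((M x)⁻¹ * matDeriv M x * (M x)⁻¹) := by
        rw [eq_neg_of_add_eq_zero_left hsum, neg_mul]

theorem matDeriv_inv_mul (hΨd : MatDifferentiable Ψ)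
    (hΨinvd : MatDifferentiable fun y => (Ψ y)⁻¹) (hΦd : MatDifferentiable Φ)
    (hunit : ∀ y, IsUnit (Ψ y)) (x : ℝ) {A B : Matrix (Fin N) (Fin N) ℂ}
    (hΨ : matDeriv Ψ x = A * Ψ x) (hΦ : matDeriv Φ x = B * Ψ x + A * Φ x) :
    matDeriv (fun y => (Ψ y)⁻¹ * Φ y) x = (Ψ x)⁻¹ * B * Ψ x := by
  have hΨΨinv : Ψ x * (Ψ x)⁻¹ = 1 := mul_nonsing_inv _ ((isUnit_iff_isUnit_det _).1 (hunit x))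
  rw [matDeriv_mul hΨinvd hΦd, matDeriv_inv hΨd hΨinvd hunit, hΨ, hΦ]
  simp only [Matrix.mul_add, Matrix.mul_assoc, hΨΨinv, Matrix.mul_one, neg_mul]
  abel

theorem hasDerivAt_vecMul_dotProduct (u v : Fin N → ℂ) (hM : MatDifferentiable M) (x : ℝ) :
    HasDerivAt (fun y => u ᵥ* M y ⬝ᵥ v) (u ᵥ* matDeriv M x ⬝ᵥ v) x := by
  simp only [dotProduct, vecMul]
  exact HasDerivAt.fun_sum fun k _ =>
    (HasDerivAt.fun_sum fun j _ => (hM.hasDerivAt_apply j k x).const_mul (u j)).mul_const (v k)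

end MatDeriv

section PseudoUnitary

variable {N : ℕ} {E Ψ : Matrix (Fin N) (Fin N) ℂ}

theorem star_vecMul_inv_of_pseudoUnitary (hEH : Eᴴ = E) (hred : E * Ψᴴ * E = Ψ⁻¹)
    (u : Fin N → ℂ) : star (u ᵥ* Ψ⁻¹) = (E * Ψ * E) *ᵥ star u := by
  rw [star_vecMul, ← hred, conjTranspose_mul, conjTranspose_mul, hEH,
    conjTranspose_conjTranspose, Matrix.mul_assoc]

theorem vecMul_inv_dotProduct_star_of_pseudoUnitary (hEH : Eᴴ = E) (hEE : E * E = 1)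
    (hred : E * Ψᴴ * E = Ψ⁻¹) (u : Fin N → ℂ) (B : Matrix (Fin N) (Fin N) ℂ) :
    u ᵥ* Ψ⁻¹ ᵥ* (B * E) ⬝ᵥ star (u ᵥ* Ψ⁻¹) = u ᵥ* (Ψ⁻¹ * B * Ψ) ⬝ᵥ (E *ᵥ star u) := by
  rw [star_vecMul_inv_of_pseudoUnitary hEH hred, dotProduct_mulVec, dotProduct_mulVec,
    vecMul_vecMul, vecMul_vecMul, vecMul_vecMul]
  congr 2
  simp only [Matrix.mul_assoc]
  rw [← Matrix.mul_assoc E E, hEE, Matrix.one_mul]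

end PseudoUnitary

theorem eq_I_smul_of_I_smul_add_eq_zero {V : Type*} [AddCommGroup V] [Module ℂ V] {X Y : V}
    (h : Complex.I • X + Y = 0) : X = Complex.I • Y := by
  rw [eq_neg_of_add_eq_zero_right h, smul_neg, smul_smul, Complex.I_mul_I, neg_one_smul, neg_neg]

theorem alpha_representation_general {N : ℕ} (μ : ℝ)
    (ε : Fin N → ℝ) (hε : ∀ p, ε p = 1 ∨ ε p = -1)
    (E : Matrix (Fin N) (Fin N) ℂ) (hE : E = Matrix.diagonal fun p => (ε p : ℂ))
    (J : Matrix (Fin N) (Fin N) ℂ)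
    (Q : ℝ → Matrix (Fin N) (Fin N) ℂ)
    (Ψ Φ : ℝ → Matrix (Fin N) (Fin N) ℂ)
    (hΨd : MatDifferentiable Ψ) (hΦd : MatDifferentiable Φ)
    (hΨinv : ∀ x, IsUnit (Ψ x))
    (hΨ : ∀ x, Complex.I • matDeriv Ψ x + ((μ : ℂ) • Q x - ((μ : ℂ)) ^ 2 • J) * Ψ x = 0)
    (hΦ : ∀ x, Complex.I • matDeriv Φ x + (Q x - (2 * (μ : ℂ)) • J) * Ψ x
        + ((μ : ℂ) • Q x - ((μ : ℂ)) ^ 2 • J) * Φ x = 0)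
    (hred : ∀ x, E * (Ψ x)ᴴ * E = (Ψ x)⁻¹)
    (F₀ : Fin N → ℂ)
    (F : ℝ → Fin N → ℂ) (hF : ∀ x, F x = Matrix.vecMul F₀ (Ψ x)⁻¹)
    (α : ℝ → ℂ) (hαd : Differentiable ℝ α)
    (hα : ∀ x, Complex.I * deriv α x =
      dotProduct (Matrix.vecMul (F x) ((Q x - (2 * (μ : ℂ)) • J) * E)) (star (F x))) :
    ∀ x y : ℝ,
      α x + dotProduct (Matrix.vecMul (F x) (Φ x * E)) (star F₀)
        = α y + dotProduct (Matrix.vecMul (F y) (Φ y * E)) (star F₀) := by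
  set A := fun x => (μ : ℂ) • Q x - (μ : ℂ) ^ 2 • J
  set B := fun x => Q x - (2 * (μ : ℂ)) • J
  set v := E *ᵥ star F₀
  have hEE : E * E = 1 := by
    rw [hE, diagonal_mul_diagonal, ← diagonal_one]
    congr 1
    funext p
    rcases hε p with h | h <;> simp [h]
  have hEH : Eᴴ = E := by
    rw [hE, diagonal_conjTranspose]
    congr 1
    funext p
    simp
  have hΨinvd : MatDifferentiable fun y => (Ψ y)⁻¹ := by
    simpa only [hred] using ((MatDifferentiable.const E).mul hΨd.conjTranspose).mul (.const E)
  have hW : ∀ x, matDeriv (fun y => (Ψ y)⁻¹ * Φ y) x = (Ψ x)⁻¹ * (Complex.I • B x) * Ψ x :=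
    fun x => matDeriv_inv_mul hΨd hΨinvd hΦd hΨinv x (A := Complex.I • A x)
      (by rw [eq_I_smul_of_I_smul_add_eq_zero (hΨ x), smul_mul])
      (by rw [eq_I_smul_of_I_smul_add_eq_zero ((add_assoc _ _ _).symm.trans (hΦ x)), smul_add,
        smul_mul, smul_mul])
  have hα' : ∀ x, Complex.I * deriv α x = F₀ ᵥ* ((Ψ x)⁻¹ * B x * Ψ x) ⬝ᵥ v := fun x => by
    rw [hα x, hF x, vecMul_inv_dotProduct_star_of_pseudoUnitary hEH hEE (hred x)]
  have hconst : ∀ x, HasDerivAt (fun y => α y + F₀ ᵥ* ((Ψ y)⁻¹ * Φ y) ⬝ᵥ v) 0 x := fun x => by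
    refine ((hαd x).hasDerivAt.add
      (hasDerivAt_vecMul_dotProduct F₀ v (hΨinvd.mul hΦd) x)).congr_deriv ?_
    rw [hW, Matrix.mul_smul, Matrix.smul_mul, vecMul_smul, smul_dotProduct, ← hα', smul_eq_mul,
      ← mul_assoc, Complex.I_mul_I]
    ring
  have hterm : ∀ x, F x ᵥ* (Φ x * E) ⬝ᵥ star F₀ = F₀ ᵥ* ((Ψ x)⁻¹ * Φ x) ⬝ᵥ v := fun x => by
    rw [hF, vecMul_vecMul, ← dotProduct_mulVec, ← dotProduct_mulVec, mulVec_mulVec,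
      Matrix.mul_assoc]
  intro x y
  rw [hterm x, hterm y]
  exact is_const_of_deriv_eq_zero (fun x => (hconst x).differentiableAt)
    (fun x => (hconst x).deriv) x y

/-- Representation of the scalar function `α` in the degenerate dressing factor:
with `Ψ` a fundamental solution at a real pole `μ`, `Φ` its `λ`-derivative,
`Fᵀ = F₀ᵀ Ψ⁻¹` and `iα' = Fᵀ(Q - 2μJ)𝓔 conj F`, the function
`x ↦ α(x) + Fᵀ(x)Φ(x)𝓔 conj(F₀)` is constant. -/
theorem alpha_representation {N : ℕ} (hN : 1 ≤ N) (μ : ℝ)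
    (ε : Fin N → ℝ) (hε : ∀ p, ε p = 1 ∨ ε p = -1)
    (E : Matrix (Fin N) (Fin N) ℂ) (hE : E = Matrix.diagonal fun p => (ε p : ℂ))
    (J : Matrix (Fin N) (Fin N) ℂ)
    (Q : ℝ → Matrix (Fin N) (Fin N) ℂ) (hQc : Continuous Q)
    (Ψ Φ : ℝ → Matrix (Fin N) (Fin N) ℂ)
    (hΨd : MatDifferentiable Ψ) (hΦd : MatDifferentiable Φ)
    (hΨinv : ∀ x, IsUnit (Ψ x))
    (hΨ : ∀ x, Complex.I • matDeriv Ψ x + ((μ : ℂ) • Q x - ((μ : ℂ)) ^ 2 • J) * Ψ x = 0)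
    (hΦ : ∀ x, Complex.I • matDeriv Φ x + (Q x - (2 * (μ : ℂ)) • J) * Ψ x
        + ((μ : ℂ) • Q x - ((μ : ℂ)) ^ 2 • J) * Φ x = 0)
    (hred : ∀ x, E * (Ψ x)ᴴ * E = (Ψ x)⁻¹)
    (F₀ : Fin N → ℂ)
    (F : ℝ → Fin N → ℂ) (hF : ∀ x, F x = Matrix.vecMul F₀ (Ψ x)⁻¹)
    (α : ℝ → ℂ) (hαd : Differentiable ℝ α)
    (hα : ∀ x, Complex.I * deriv α x =
      dotProduct (Matrix.vecMul (F x) ((Q x - (2 * (μ : ℂ)) • J) * E)) (star (F x))) :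
    ∀ x y : ℝ,
      α x + dotProduct (Matrix.vecMul (F x) (Φ x * E)) (star F₀)
        = α y + dotProduct (Matrix.vecMul (F y) (Φ y * E)) (star F₀) :=
  alpha_representation_general μ ε hε E hE J Q Ψ Φ hΨd hΦd hΨinv hΨ hΦ hred F₀ F hF α hαd hα
end
end

section
/- Let ρ > 0 and define q : ℝ×ℝ → ℂ by q(x,t) = 4ρ · (1 + 4iρ²(x + 4ρ²t))³ / (1 + 16ρ⁴(x + 4ρ²t)²)² · e^{−2iρ²(x + 2ρ²t)}. Then q is smooth (the denominator never vanishes) and satisfies i∂ₜq + ∂ₓₓq − i·∂ₓ(q²·conj(q)) = 0 on ℝ². -/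
noncomputable section

/-- Partial derivative in the first (space) variable. -/
def pdx (f : ℝ × ℝ → ℂ) (x t : ℝ) : ℂ := deriv (fun y => f (y, t)) x

/-- Partial derivative in the second (time) variable. -/
def pdt (f : ℝ × ℝ → ℂ) (x t : ℝ) : ℂ := deriv (fun s => f (x, s)) t

namespace DNLSAux

noncomputable def NN (c : ℂ) (x t : ℝ) : ℂ := 1 + 4*Complex.I*c^2*((x:ℂ) + 4*c^2*(t:ℂ))
noncomputable def MM (c : ℂ) (x t : ℝ) : ℂ := 1 - 4*Complex.I*c^2*((x:ℂ) + 4*c^2*(t:ℂ))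
noncomputable def EE (c : ℂ) (x t : ℝ) : ℂ := Complex.exp (-2*Complex.I*c^2*((x:ℂ) + 2*c^2*(t:ℂ)))

lemma hasDerivAt_ofReal' (x : ℝ) : HasDerivAt (fun y:ℝ => (y:ℂ)) 1 x := by
  simpa using (hasDerivAt_id x).ofReal_comp

lemma hNx (c : ℂ) (t x : ℝ) : HasDerivAt (fun y:ℝ => NN c y t) (4*Complex.I*c^2) x := by
  have h := (((hasDerivAt_ofReal' x).add_const (4*c^2*(t:ℂ))).const_mul (4*Complex.I*c^2)).const_add 1
  simpa [NN] using h

lemma hMx (c : ℂ) (t x : ℝ) : HasDerivAt (fun y:ℝ => MM c y t) (-(4*Complex.I*c^2)) x := by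
  have h := (((hasDerivAt_ofReal' x).add_const (4*c^2*(t:ℂ))).const_mul (4*Complex.I*c^2)).const_sub 1
  simpa [MM] using h

lemma hEx (c : ℂ) (t x : ℝ) :
    HasDerivAt (fun y:ℝ => EE c y t) (EE c x t * (-2*Complex.I*c^2)) x := by
  have h := ((((hasDerivAt_ofReal' x).add_const (2*c^2*(t:ℂ))).const_mul (-2*Complex.I*c^2))).cexp
  simpa [EE] using h

lemma hNt (c : ℂ) (x t : ℝ) : HasDerivAt (fun s:ℝ => NN c x s) (16*Complex.I*c^4) t := by
  have h := ((((hasDerivAt_ofReal' t).const_mul (4*c^2)).const_add (x:ℂ)).const_mul (4*Complex.I*c^2)).const_add 1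
  simp only [NN]
  rw [show (16*Complex.I*c^4 : ℂ) = 4*Complex.I*c^2*(4*c^2*1) from by ring]
  exact h

lemma hMt (c : ℂ) (x t : ℝ) : HasDerivAt (fun s:ℝ => MM c x s) (-(16*Complex.I*c^4)) t := by
  have h := ((((hasDerivAt_ofReal' t).const_mul (4*c^2)).const_add (x:ℂ)).const_mul (4*Complex.I*c^2)).const_sub 1
  simp only [MM]
  rw [show (-(16*Complex.I*c^4) : ℂ) = -(4*Complex.I*c^2*(4*c^2*1)) from by ring]
  exact h

lemma hEt (c : ℂ) (x t : ℝ) :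
    HasDerivAt (fun s:ℝ => EE c x s) (EE c x t * (-4*Complex.I*c^4)) t := by
  have h := ((((hasDerivAt_ofReal' t).const_mul (2*c^2)).const_add (x:ℂ)).const_mul (-2*Complex.I*c^2)).cexp
  simp only [EE]
  rw [show (Complex.exp (-2*Complex.I*c^2*((x:ℂ) + 2*c^2*(t:ℂ))) * (-4*Complex.I*c^4) : ℂ)
      = Complex.exp (-2*Complex.I*c^2*((x:ℂ) + 2*c^2*(t:ℂ))) * (-2*Complex.I*c^2*(2*c^2*1)) from by ring]
  exact h

lemma MM_ne (ρ x t : ℝ) : MM (ρ:ℂ) x t ≠ 0 := by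
  intro h
  have := congrArg Complex.re h
  simp [MM, Complex.ext_iff, ← Complex.ofReal_pow] at this

lemma NN_ne (ρ x t : ℝ) : NN (ρ:ℂ) x t ≠ 0 := by
  intro h
  have := congrArg Complex.re h
  simp [NN, Complex.ext_iff, ← Complex.ofReal_pow] at this

lemma hNM (ρ x t : ℝ) :
    (1 : ℂ) + 16 * (ρ:ℂ) ^ 4 * ((x : ℂ) + 4 * (ρ:ℂ) ^ 2 * (t : ℂ)) ^ 2
      = NN (ρ:ℂ) x t * MM (ρ:ℂ) x t := by
  simp only [NN, MM]
  linear_combination (16*(ρ:ℂ)^4*((x:ℂ) + 4*(ρ:ℂ)^2*(t:ℂ))^2) * Complex.I_sq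

lemma conj_NN (ρ x t : ℝ) : (starRingEnd ℂ) (NN (ρ:ℂ) x t) = MM (ρ:ℂ) x t := by
  simp [NN, MM, map_add, map_mul, map_pow, Complex.conj_ofReal, Complex.conj_I, map_ofNat]
  ring

lemma conj_MM (ρ x t : ℝ) : (starRingEnd ℂ) (MM (ρ:ℂ) x t) = NN (ρ:ℂ) x t := by
  simp [NN, MM, map_sub, map_add, map_mul, map_pow, Complex.conj_ofReal, Complex.conj_I, map_ofNat]

lemma conj_EE (ρ x t : ℝ) : (starRingEnd ℂ) (EE (ρ:ℂ) x t)
    = Complex.exp (2*Complex.I*(ρ:ℂ)^2*((x:ℂ) + 2*(ρ:ℂ)^2*(t:ℂ))) := by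
  simp only [EE, ← Complex.exp_conj]
  congr 1
  simp [map_mul, map_add, map_pow, Complex.conj_ofReal, Complex.conj_I, map_ofNat]

lemma EE_sq (ρ x t : ℝ) :
    EE (ρ:ℂ) x t ^ 2 * Complex.exp (2*Complex.I*(ρ:ℂ)^2*((x:ℂ) + 2*(ρ:ℂ)^2*(t:ℂ)))
      = EE (ρ:ℂ) x t := by
  simp only [EE, sq, ← Complex.exp_add]
  congr 1
  ring

lemma core (i c n m e : ℂ) (hm : m ≠ 0) (he : e ≠ 0) (hnm : n + m = 2) :
    i * (16*i*c^5*(4*m+8*n-n*m)/m^3*e)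
    + (8*i*c^3*((8*i*c^2 + 4*i*c^2*(n-m))*m + 12*i*c^2*(2*m+4*n-n*m))/m^4*e
       - 2*i*c^2*(8*i*c^3*(2*m+4*n-n*m)/m^3*e))
    - i*(128*i*c^5*(6-m)/m^4*e) = 0 := by
  field_simp
  rw [show n = 2 - m from by linear_combination hnm]
  ring

end DNLSAux

set_option maxHeartbeats 1600000 in
open Complex DNLSAux in
/-- The rational solution of DNLS "−" obtained from a pair of real poles `±ρ`:
`q = 4ρ (1 + 4iρ²(x+4ρ²t))³ / (1 + 16ρ⁴(x+4ρ²t)²)² e^{-2iρ²(x+2ρ²t)}` is smooth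
(with nonvanishing denominator) and solves `i qₜ + qₓₓ - i (q² q*)ₓ = 0`. -/
theorem dnls_minus_rational_solution (ρ : ℝ) (hρ : 0 < ρ)
    (q : ℝ × ℝ → ℂ)
    (hq : ∀ x t : ℝ, q (x, t) =
      4 * (ρ : ℂ) * (1 + 4 * Complex.I * (ρ : ℂ) ^ 2 * ((x : ℂ) + 4 * (ρ : ℂ) ^ 2 * (t : ℂ))) ^ 3
        / (1 + 16 * (ρ : ℂ) ^ 4 * ((x : ℂ) + 4 * (ρ : ℂ) ^ 2 * (t : ℂ)) ^ 2) ^ 2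
        * Complex.exp (-2 * Complex.I * (ρ : ℂ) ^ 2 * ((x : ℂ) + 2 * (ρ : ℂ) ^ 2 * (t : ℂ)))) :
    (∀ x t : ℝ, (1 : ℂ) + 16 * (ρ : ℂ) ^ 4 * ((x : ℂ) + 4 * (ρ : ℂ) ^ 2 * (t : ℂ)) ^ 2 ≠ 0) ∧
    ContDiff ℝ (⊤ : ℕ∞) q ∧
    (∀ x t : ℝ,
      Complex.I * pdt q x t + pdx (fun p => pdx q p.1 p.2) x t
        - Complex.I * pdx (fun p => q p ^ 2 * starRingEnd ℂ (q p)) x t = 0) := by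
  have hden : ∀ x t : ℝ, (1 : ℂ) + 16 * (ρ:ℂ) ^ 4 * ((x : ℂ) + 4 * (ρ:ℂ) ^ 2 * (t : ℂ)) ^ 2 ≠ 0 := by
    intro x t
    rw [hNM ρ x t]
    exact mul_ne_zero (NN_ne ρ x t) (MM_ne ρ x t)
  -- simplified formula for q
  have hqF : ∀ x t : ℝ, q (x, t) = 4*(ρ:ℂ)*NN (ρ:ℂ) x t/(MM (ρ:ℂ) x t)^2*EE (ρ:ℂ) x t := by
    intro x t
    rw [hq x t, hNM ρ x t]
    have hN := NN_ne ρ x t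
    have hM := MM_ne ρ x t
    rw [show ((1:ℂ) + 4 * Complex.I * (ρ:ℂ) ^ 2 * ((x : ℂ) + 4 * (ρ:ℂ) ^ 2 * (t : ℂ)))
        = NN (ρ:ℂ) x t from rfl]
    rw [show Complex.exp (-2 * Complex.I * (ρ:ℂ) ^ 2 * ((x : ℂ) + 2 * (ρ:ℂ) ^ 2 * (t : ℂ)))
        = EE (ρ:ℂ) x t from rfl]
    field_simp
  -- conjugate of q
  have hqC : ∀ x t : ℝ, (starRingEnd ℂ) (q (x, t))
      = 4*(ρ:ℂ)*MM (ρ:ℂ) x t/(NN (ρ:ℂ) x t)^2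
        * Complex.exp (2*Complex.I*(ρ:ℂ)^2*((x:ℂ) + 2*(ρ:ℂ)^2*(t:ℂ))) := by
    intro x t
    rw [hqF x t]
    simp only [map_mul, map_div₀, map_pow, conj_NN ρ x t, conj_MM ρ x t, conj_EE ρ x t,
      map_ofNat, Complex.conj_ofReal]
  -- cubic term
  have hcube : ∀ x t : ℝ, q (x, t) ^ 2 * (starRingEnd ℂ) (q (x, t))
      = 64*(ρ:ℂ)^3/(MM (ρ:ℂ) x t)^3 * EE (ρ:ℂ) x t := by
    intro x t
    rw [hqC x t, hqF x t]
    have hN := NN_ne ρ x t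
    have hM := MM_ne ρ x t
    rw [show (4*(ρ:ℂ)*NN (ρ:ℂ) x t/(MM (ρ:ℂ) x t)^2*EE (ρ:ℂ) x t) ^ 2
        * (4*(ρ:ℂ)*MM (ρ:ℂ) x t/(NN (ρ:ℂ) x t)^2
            * Complex.exp (2*Complex.I*(ρ:ℂ)^2*((x:ℂ) + 2*(ρ:ℂ)^2*(t:ℂ))))
        = 64*(ρ:ℂ)^3/(MM (ρ:ℂ) x t)^3
          * (EE (ρ:ℂ) x t ^ 2 * Complex.exp (2*Complex.I*(ρ:ℂ)^2*((x:ℂ) + 2*(ρ:ℂ)^2*(t:ℂ)))) from by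
      field_simp
      ring]
    rw [EE_sq ρ x t]
  -- first x-derivative of q
  have hQ1 : ∀ x t : ℝ, HasDerivAt (fun y:ℝ => q (y, t))
      (8*Complex.I*(ρ:ℂ)^3*(2*MM (ρ:ℂ) x t+4*NN (ρ:ℂ) x t-NN (ρ:ℂ) x t*MM (ρ:ℂ) x t)
        /(MM (ρ:ℂ) x t)^3*EE (ρ:ℂ) x t) x := by
    intro x t
    have hfn : (fun y:ℝ => q (y, t)) = fun y:ℝ => 4*(ρ:ℂ)*NN (ρ:ℂ) y t/(MM (ρ:ℂ) y t)^2*EE (ρ:ℂ) y t :=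
      funext fun y => hqF y t
    rw [hfn]
    have hM2 : HasDerivAt (fun y:ℝ => (MM (ρ:ℂ) y t)^2)
        (-(4*Complex.I*(ρ:ℂ)^2) * MM (ρ:ℂ) x t + MM (ρ:ℂ) x t * -(4*Complex.I*(ρ:ℂ)^2)) x := by
      have h2 : (fun y:ℝ => (MM (ρ:ℂ) y t)^2) = fun y:ℝ => MM (ρ:ℂ) y t * MM (ρ:ℂ) y t := by
        funext y; ring
      rw [h2]
      exact (hMx (ρ:ℂ) t x).mul (hMx (ρ:ℂ) t x)
    have h := (((hNx (ρ:ℂ) t x).const_mul (4*(ρ:ℂ))).div hM2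
      (by simpa using pow_ne_zero 2 (MM_ne ρ x t))).mul (hEx (ρ:ℂ) t x)
    refine h.congr_deriv ?_
    have hM := MM_ne ρ x t
    simp only [Pi.div_apply]
    field_simp
    ring
  -- pdx q as explicit formula
  have hpdx : ∀ x t : ℝ, pdx q x t
      = 8*Complex.I*(ρ:ℂ)^3*(2*MM (ρ:ℂ) x t+4*NN (ρ:ℂ) x t-NN (ρ:ℂ) x t*MM (ρ:ℂ) x t)
        /(MM (ρ:ℂ) x t)^3*EE (ρ:ℂ) x t := by
    intro x t
    exact (hQ1 x t).deriv
  -- second x-derivative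
  have hQ2 : ∀ x t : ℝ, pdx (fun p => pdx q p.1 p.2) x t
      = 8*Complex.I*(ρ:ℂ)^3*((8*Complex.I*(ρ:ℂ)^2
            + 4*Complex.I*(ρ:ℂ)^2*(NN (ρ:ℂ) x t-MM (ρ:ℂ) x t))*MM (ρ:ℂ) x t
          + 12*Complex.I*(ρ:ℂ)^2*(2*MM (ρ:ℂ) x t+4*NN (ρ:ℂ) x t-NN (ρ:ℂ) x t*MM (ρ:ℂ) x t))
          /(MM (ρ:ℂ) x t)^4*EE (ρ:ℂ) x t
        - 2*Complex.I*(ρ:ℂ)^2*(8*Complex.I*(ρ:ℂ)^3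
            *(2*MM (ρ:ℂ) x t+4*NN (ρ:ℂ) x t-NN (ρ:ℂ) x t*MM (ρ:ℂ) x t)
            /(MM (ρ:ℂ) x t)^3*EE (ρ:ℂ) x t) := by
    intro x t
    have hfn : (fun y:ℝ => pdx q y t)
        = fun y:ℝ => 8*Complex.I*(ρ:ℂ)^3*(2*MM (ρ:ℂ) y t+4*NN (ρ:ℂ) y t-NN (ρ:ℂ) y t*MM (ρ:ℂ) y t)
          /(MM (ρ:ℂ) y t)^3*EE (ρ:ℂ) y t :=
      funext fun y => hpdx y t
    show deriv (fun y:ℝ => pdx q y t) x = _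
    rw [hfn]
    have hP : HasDerivAt (fun y:ℝ => 2*MM (ρ:ℂ) y t+4*NN (ρ:ℂ) y t-NN (ρ:ℂ) y t*MM (ρ:ℂ) y t)
        (2*(-(4*Complex.I*(ρ:ℂ)^2)) + 4*(4*Complex.I*(ρ:ℂ)^2)
          - (4*Complex.I*(ρ:ℂ)^2*MM (ρ:ℂ) x t + NN (ρ:ℂ) x t*(-(4*Complex.I*(ρ:ℂ)^2)))) x :=
      (((hMx (ρ:ℂ) t x).const_mul 2).add ((hNx (ρ:ℂ) t x).const_mul 4)).sub
        ((hNx (ρ:ℂ) t x).mul (hMx (ρ:ℂ) t x))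
    have hM3 : HasDerivAt (fun y:ℝ => (MM (ρ:ℂ) y t)^3)
        ((-(4*Complex.I*(ρ:ℂ)^2) * MM (ρ:ℂ) x t + MM (ρ:ℂ) x t * -(4*Complex.I*(ρ:ℂ)^2)) * MM (ρ:ℂ) x t
          + MM (ρ:ℂ) x t * MM (ρ:ℂ) x t * -(4*Complex.I*(ρ:ℂ)^2)) x := by
      have h3 : (fun y:ℝ => (MM (ρ:ℂ) y t)^3)
          = fun y:ℝ => MM (ρ:ℂ) y t * MM (ρ:ℂ) y t * MM (ρ:ℂ) y t := by
        funext y; ring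
      rw [h3]
      exact ((hMx (ρ:ℂ) t x).mul (hMx (ρ:ℂ) t x)).mul (hMx (ρ:ℂ) t x)
    have h := ((hP.const_mul (8*Complex.I*(ρ:ℂ)^3)).div hM3
      (by simpa using pow_ne_zero 3 (MM_ne ρ x t))).mul (hEx (ρ:ℂ) t x)
    erw [h.deriv]
    have hM := MM_ne ρ x t
    simp only [Pi.div_apply]
    field_simp
    ring
  -- t-derivative
  have hQt : ∀ x t : ℝ, pdt q x t
      = 16*Complex.I*(ρ:ℂ)^5*(4*MM (ρ:ℂ) x t+8*NN (ρ:ℂ) x t-NN (ρ:ℂ) x t*MM (ρ:ℂ) x t)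
        /(MM (ρ:ℂ) x t)^3*EE (ρ:ℂ) x t := by
    intro x t
    have hfn : (fun s:ℝ => q (x, s)) = fun s:ℝ => 4*(ρ:ℂ)*NN (ρ:ℂ) x s/(MM (ρ:ℂ) x s)^2*EE (ρ:ℂ) x s :=
      funext fun s => hqF x s
    show deriv (fun s:ℝ => q (x, s)) t = _
    rw [hfn]
    have hM2 : HasDerivAt (fun s:ℝ => (MM (ρ:ℂ) x s)^2)
        (-(16*Complex.I*(ρ:ℂ)^4) * MM (ρ:ℂ) x t + MM (ρ:ℂ) x t * -(16*Complex.I*(ρ:ℂ)^4)) t := by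
      have h2 : (fun s:ℝ => (MM (ρ:ℂ) x s)^2) = fun s:ℝ => MM (ρ:ℂ) x s * MM (ρ:ℂ) x s := by
        funext s; ring
      rw [h2]
      exact (hMt (ρ:ℂ) x t).mul (hMt (ρ:ℂ) x t)
    have h := (((hNt (ρ:ℂ) x t).const_mul (4*(ρ:ℂ))).div hM2
      (by simpa using pow_ne_zero 2 (MM_ne ρ x t))).mul (hEt (ρ:ℂ) x t)
    erw [h.deriv]
    have hM := MM_ne ρ x t
    simp only [Pi.div_apply]
    field_simp
    ring
  -- derivative of the nonlinear term
  have hQn : ∀ x t : ℝ, pdx (fun p => q p ^ 2 * starRingEnd ℂ (q p)) x t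
      = 128*Complex.I*(ρ:ℂ)^5*(6-MM (ρ:ℂ) x t)/(MM (ρ:ℂ) x t)^4*EE (ρ:ℂ) x t := by
    intro x t
    have hfn : (fun y:ℝ => q (y, t) ^ 2 * (starRingEnd ℂ) (q (y, t)))
        = fun y:ℝ => 64*(ρ:ℂ)^3/(MM (ρ:ℂ) y t)^3*EE (ρ:ℂ) y t :=
      funext fun y => hcube y t
    show deriv (fun y:ℝ => q (y, t) ^ 2 * (starRingEnd ℂ) (q (y, t))) x = _
    rw [hfn]
    have hM3 : HasDerivAt (fun y:ℝ => (MM (ρ:ℂ) y t)^3)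
        ((-(4*Complex.I*(ρ:ℂ)^2) * MM (ρ:ℂ) x t + MM (ρ:ℂ) x t * -(4*Complex.I*(ρ:ℂ)^2)) * MM (ρ:ℂ) x t
          + MM (ρ:ℂ) x t * MM (ρ:ℂ) x t * -(4*Complex.I*(ρ:ℂ)^2)) x := by
      have h3 : (fun y:ℝ => (MM (ρ:ℂ) y t)^3)
          = fun y:ℝ => MM (ρ:ℂ) y t * MM (ρ:ℂ) y t * MM (ρ:ℂ) y t := by
        funext y; ring
      rw [h3]
      exact ((hMx (ρ:ℂ) t x).mul (hMx (ρ:ℂ) t x)).mul (hMx (ρ:ℂ) t x)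
    have h := ((hasDerivAt_const x ((64:ℂ)*(ρ:ℂ)^3)).div hM3
      (by simpa using pow_ne_zero 3 (MM_ne ρ x t))).mul (hEx (ρ:ℂ) t x)
    erw [h.deriv]
    have hM := MM_ne ρ x t
    simp only [Pi.div_apply]
    field_simp
    ring
  -- smoothness
  have hsmooth : ContDiff ℝ (⊤ : ℕ∞) q := by
    have hqfun : q = fun p : ℝ×ℝ => 4*(ρ:ℂ)*NN (ρ:ℂ) p.1 p.2/(MM (ρ:ℂ) p.1 p.2)^2*EE (ρ:ℂ) p.1 p.2 := by
      funext p
      rw [← Prod.mk.eta (p := p), hqF p.1 p.2]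
    rw [hqfun]
    have hwx : ContDiff ℝ (⊤ : ℕ∞) (fun p : ℝ×ℝ => ((p.1:ℝ):ℂ)) :=
      Complex.ofRealCLM.contDiff.comp contDiff_fst
    have hwt : ContDiff ℝ (⊤ : ℕ∞) (fun p : ℝ×ℝ => ((p.2:ℝ):ℂ)) :=
      Complex.ofRealCLM.contDiff.comp contDiff_snd
    have hNN : ContDiff ℝ (⊤ : ℕ∞) (fun p : ℝ×ℝ => NN (ρ:ℂ) p.1 p.2) := by
      simp only [NN]
      exact contDiff_const.add (contDiff_const.mul (hwx.add (contDiff_const.mul hwt)))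
    have hMM : ContDiff ℝ (⊤ : ℕ∞) (fun p : ℝ×ℝ => MM (ρ:ℂ) p.1 p.2) := by
      simp only [MM]
      exact contDiff_const.sub (contDiff_const.mul (hwx.add (contDiff_const.mul hwt)))
    have hEE : ContDiff ℝ (⊤ : ℕ∞) (fun p : ℝ×ℝ => EE (ρ:ℂ) p.1 p.2) := by
      simp only [EE]
      exact (contDiff_const.mul (hwx.add (contDiff_const.mul hwt))).cexp
    have hMM2 : ContDiff ℝ (⊤ : ℕ∞) (fun p : ℝ×ℝ => (MM (ρ:ℂ) p.1 p.2)^2) := hMM.pow 2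
    have h1 : ContDiff ℝ (⊤ : ℕ∞) (fun p : ℝ×ℝ => 4*(ρ:ℂ)*NN (ρ:ℂ) p.1 p.2) := contDiff_const.mul hNN
    have h0 : ∀ p : ℝ×ℝ, (MM (ρ:ℂ) p.1 p.2)^2 ≠ 0 := fun p => pow_ne_zero 2 (MM_ne ρ p.1 p.2)
    have hrw : (fun p : ℝ×ℝ => 4*(ρ:ℂ)*NN (ρ:ℂ) p.1 p.2/(MM (ρ:ℂ) p.1 p.2)^2*EE (ρ:ℂ) p.1 p.2)
        = fun p : ℝ×ℝ => 4*(ρ:ℂ)*NN (ρ:ℂ) p.1 p.2*((MM (ρ:ℂ) p.1 p.2)^2)⁻¹*EE (ρ:ℂ) p.1 p.2 := by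
      funext p; rw [div_eq_mul_inv]
    rw [hrw]
    exact (h1.mul (hMM2.inv h0)).mul hEE
  refine ⟨hden, hsmooth, ?_⟩
  intro x t
  rw [hQt x t, hQ2 x t, hQn x t]
  exact core Complex.I (ρ:ℂ) (NN (ρ:ℂ) x t) (MM (ρ:ℂ) x t) (EE (ρ:ℂ) x t) (MM_ne ρ x t)
    (by simp only [EE]; exact Complex.exp_ne_zero _) (by simp only [NN, MM]; ring)
end
end

section
/- Let ρ > 0 and define q : ℝ×ℝ → ℂ by q(x,t) = 4ρ · (1 − 4iρ²(x − 4ρ²t))³ / (1 + 16ρ⁴(x − 4ρ²t)²)² · e^{2iρ²(x − 2ρ²t)}. Then q is smooth (the denominator never vanishes) and satisfies i∂ₜq + ∂ₓₓq + i·∂ₓ(q²·conj(q)) = 0 on ℝ². -/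
noncomputable section

open Complex

lemma dnls_hda_congr {f g : ℂ → ℂ} {v w : ℂ} {z : ℂ} (h : HasDerivAt f v z)
    (hfg : ∀ x, f x = g x) (hvw : v = w) : HasDerivAt g w z := by
  subst hvw
  exact h.congr_of_eventuallyEq (Filter.Eventually.of_forall fun x => (hfg x).symm)

lemma dnls_aux (N D φ : ℂ → ℂ) (Nz d μ : ℂ) (m : ℕ) (z : ℂ)
    (hN : HasDerivAt N Nz z) (hD : HasDerivAt D d z) (hφ : HasDerivAt φ μ z)
    (h0 : D z ≠ 0) :
    HasDerivAt (fun w => N w / D w ^ (m + 1) * Complex.exp (φ w))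
      (((Nz * D z - ((m : ℂ) + 1) * d * N z) / D z ^ (m + 2)
          + μ * (N z / D z ^ (m + 1))) * Complex.exp (φ z)) z := by
  have hpow := hD.pow (m + 1)
  simp only [Nat.add_sub_cancel] at hpow
  have hdiv := hN.div hpow (pow_ne_zero _ h0)
  have h : HasDerivAt (fun w => N w / D w ^ (m + 1) * Complex.exp (φ w)) _ z := hdiv.mul hφ.cexp
  convert h using 1
  have h1 : D z ^ (m + 1) ≠ 0 := pow_ne_zero _ h0
  simp only [Pi.pow_apply, Pi.div_apply, Nat.cast_add, Nat.cast_one]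
  field_simp
  ring

section
variable (c : ℂ) (t x : ℝ)

lemma dnls_ha : HasDerivAt (fun w : ℂ => 4*I*c^2*(w - 4*c^2*(t:ℂ))) (4*I*c^2) (x:ℂ) :=
  dnls_hda_congr (((hasDerivAt_id ((x:ℂ))).sub_const (4*c^2*(t:ℂ))).const_mul (4*I*c^2))
    (fun w => by simp only [id_eq]; try ring) (by try ring)

lemma dnls_hphi : HasDerivAt (fun w : ℂ => 2*I*c^2*(w - 2*c^2*(t:ℂ))) (2*I*c^2) (x:ℂ) :=
  dnls_hda_congr (((hasDerivAt_id ((x:ℂ))).sub_const (2*c^2*(t:ℂ))).const_mul (2*I*c^2))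
    (fun w => by simp only [id_eq]; try ring) (by try ring)

lemma dnls_hD : HasDerivAt (fun w : ℂ => 1 + 4*I*c^2*(w - 4*c^2*(t:ℂ))) (4*I*c^2) (x:ℂ) :=
  dnls_hda_congr ((dnls_ha c t x).const_add 1) (fun w => by try ring) (by try ring)

lemma dnls_L1 (h0 : (1:ℂ) + 4*I*c^2*((x:ℂ) - 4*c^2*(t:ℂ)) ≠ 0) :
    HasDerivAt (fun y : ℝ =>
        4*c*(1 - 4*I*c^2*((y:ℂ) - 4*c^2*(t:ℂ))) / (1 + 4*I*c^2*((y:ℂ) - 4*c^2*(t:ℂ)))^2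
          * Complex.exp (2*I*c^2*((y:ℂ) - 2*c^2*(t:ℂ))))
      (2*c*(4*I*c^2)*(2*(4*I*c^2*((x:ℂ) - 4*c^2*(t:ℂ))) - 5 - (4*I*c^2*((x:ℂ) - 4*c^2*(t:ℂ)))^2)
          / (1 + 4*I*c^2*((x:ℂ) - 4*c^2*(t:ℂ)))^3
          * Complex.exp (2*I*c^2*((x:ℂ) - 2*c^2*(t:ℂ)))) x := by
  have ha := dnls_ha c t x
  have hN : HasDerivAt (fun w : ℂ => 4*c*(1 - 4*I*c^2*(w - 4*c^2*(t:ℂ)))) (-(16*I*c^3)) (x:ℂ) :=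
    dnls_hda_congr ((ha.const_sub 1).const_mul (4*c)) (fun w => by try ring) (by try ring)
  have h := (dnls_aux _ _ _ _ _ _ 1 _ hN (dnls_hD c t x) (dnls_hphi c t x) h0).comp_ofReal
  convert h using 1
  norm_num only
  field_simp
  ring

lemma dnls_L2 (h0 : (1:ℂ) + 4*I*c^2*((x:ℂ) - 4*c^2*(t:ℂ)) ≠ 0) :
    HasDerivAt (fun y : ℝ =>
        2*c*(4*I*c^2)*(2*(4*I*c^2*((y:ℂ) - 4*c^2*(t:ℂ))) - 5 - (4*I*c^2*((y:ℂ) - 4*c^2*(t:ℂ)))^2)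
          / (1 + 4*I*c^2*((y:ℂ) - 4*c^2*(t:ℂ)))^3
          * Complex.exp (2*I*c^2*((y:ℂ) - 2*c^2*(t:ℂ))))
      (c*(4*I*c^2)^2*(-(4*I*c^2*((x:ℂ) - 4*c^2*(t:ℂ)))^3 + 3*(4*I*c^2*((x:ℂ) - 4*c^2*(t:ℂ)))^2
            - 15*(4*I*c^2*((x:ℂ) - 4*c^2*(t:ℂ))) + 29)
          / (1 + 4*I*c^2*((x:ℂ) - 4*c^2*(t:ℂ)))^4
          * Complex.exp (2*I*c^2*((x:ℂ) - 2*c^2*(t:ℂ)))) x := by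
  have ha := dnls_ha c t x
  have hN : HasDerivAt
      (fun w : ℂ => 2*c*(4*I*c^2)*(2*(4*I*c^2*(w - 4*c^2*(t:ℂ))) - 5 - (4*I*c^2*(w - 4*c^2*(t:ℂ)))^2))
      (2*c*(4*I*c^2)*(4*I*c^2)*(2 - 2*(4*I*c^2*((x:ℂ) - 4*c^2*(t:ℂ))))) (x:ℂ) :=
    dnls_hda_congr ((((ha.const_mul 2).sub_const 5).sub (ha.pow 2)).const_mul (2*c*(4*I*c^2)))
      (fun w => by simp only [Pi.sub_apply, Pi.pow_apply]) (by push_cast; try ring)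
  have h := (dnls_aux _ _ _ _ _ _ 2 _ hN (dnls_hD c t x) (dnls_hphi c t x) h0).comp_ofReal
  convert h using 1
  norm_num only
  field_simp
  ring

lemma dnls_L3 (h0 : (1:ℂ) + 4*I*c^2*((x:ℂ) - 4*c^2*(t:ℂ)) ≠ 0) :
    HasDerivAt (fun y : ℝ =>
        64*c^3 / (1 + 4*I*c^2*((y:ℂ) - 4*c^2*(t:ℂ)))^3
          * Complex.exp (2*I*c^2*((y:ℂ) - 2*c^2*(t:ℂ))))
      (32*c^3*(4*I*c^2)*((4*I*c^2*((x:ℂ) - 4*c^2*(t:ℂ))) - 5)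
          / (1 + 4*I*c^2*((x:ℂ) - 4*c^2*(t:ℂ)))^4
          * Complex.exp (2*I*c^2*((x:ℂ) - 2*c^2*(t:ℂ)))) x := by
  have hN : HasDerivAt (fun _ : ℂ => (64*c^3 : ℂ)) 0 (x:ℂ) := hasDerivAt_const _ _
  have h := (dnls_aux _ _ _ _ _ _ 2 _ hN (dnls_hD c t x) (dnls_hphi c t x) h0).comp_ofReal
  convert h using 1
  norm_num only
  field_simp
  ring

lemma dnls_L4 (h0 : (1:ℂ) + 4*I*c^2*((x:ℂ) - 4*c^2*(t:ℂ)) ≠ 0) :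
    HasDerivAt (fun s : ℝ =>
        4*c*(1 - 4*I*c^2*((x:ℂ) - 4*c^2*(s:ℂ))) / (1 + 4*I*c^2*((x:ℂ) - 4*c^2*(s:ℂ)))^2
          * Complex.exp (2*I*c^2*((x:ℂ) - 2*c^2*(s:ℂ))))
      (4*c^3*(4*I*c^2)*((4*I*c^2*((x:ℂ) - 4*c^2*(t:ℂ)))^2 - 4*(4*I*c^2*((x:ℂ) - 4*c^2*(t:ℂ))) + 11)
          / (1 + 4*I*c^2*((x:ℂ) - 4*c^2*(t:ℂ)))^3
          * Complex.exp (2*I*c^2*((x:ℂ) - 2*c^2*(t:ℂ)))) t := by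
  have hid := hasDerivAt_id ((t:ℂ))
  have hN : HasDerivAt (fun s : ℂ => 4*c*(1 - 4*I*c^2*((x:ℂ) - 4*c^2*s))) (64*I*c^5) (t:ℂ) :=
    dnls_hda_congr (((((hid.const_mul (4*c^2)).const_sub ((x:ℂ))).const_mul (4*I*c^2)).const_sub 1).const_mul (4*c))
      (fun w => by simp only [id_eq]; try ring) (by try ring)
  have hD : HasDerivAt (fun s : ℂ => 1 + 4*I*c^2*((x:ℂ) - 4*c^2*s)) (-(16*I*c^4)) (t:ℂ) :=
    dnls_hda_congr ((((hid.const_mul (4*c^2)).const_sub ((x:ℂ))).const_mul (4*I*c^2)).const_add 1)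
      (fun w => by simp only [id_eq]; try ring) (by try ring)
  have hφ : HasDerivAt (fun s : ℂ => 2*I*c^2*((x:ℂ) - 2*c^2*s)) (-(4*I*c^4)) (t:ℂ) :=
    dnls_hda_congr (((hid.const_mul (2*c^2)).const_sub ((x:ℂ))).const_mul (2*I*c^2))
      (fun w => by simp only [id_eq]; try ring) (by try ring)
  have h := (dnls_aux _ _ _ _ _ _ 1 _ hN hD hφ h0).comp_ofReal
  convert h using 1
  norm_num only
  field_simp
  ring
end

section
variable (ρ : ℝ)

lemma dnls_ne_p (y t : ℝ) : (1:ℂ) + 4*I*(ρ:ℂ)^2*((y:ℂ) - 4*(ρ:ℂ)^2*(t:ℂ)) ≠ 0 := by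
  have h : 4*I*(ρ:ℂ)^2*((y:ℂ) - 4*(ρ:ℂ)^2*(t:ℂ)) = ((4*ρ^2*(y - 4*ρ^2*t) : ℝ) : ℂ) * I := by
    push_cast; ring
  rw [h]
  intro hc
  have := congrArg Complex.re hc
  simp [Complex.add_re, Complex.mul_re, Complex.ofReal_re, Complex.ofReal_im,
    Complex.I_re, Complex.I_im, ← Complex.ofReal_pow] at this

lemma dnls_ne_m (y t : ℝ) : (1:ℂ) - 4*I*(ρ:ℂ)^2*((y:ℂ) - 4*(ρ:ℂ)^2*(t:ℂ)) ≠ 0 := by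
  have h : 4*I*(ρ:ℂ)^2*((y:ℂ) - 4*(ρ:ℂ)^2*(t:ℂ)) = ((4*ρ^2*(y - 4*ρ^2*t) : ℝ) : ℂ) * I := by
    push_cast; ring
  rw [h]
  intro hc
  have := congrArg Complex.re hc
  simp [Complex.sub_re, Complex.mul_re, Complex.ofReal_re, Complex.ofReal_im,
    Complex.I_re, Complex.I_im, ← Complex.ofReal_pow] at this

lemma dnls_den (x t : ℝ) :
    (1 : ℂ) + 16 * (ρ : ℂ) ^ 4 * ((x : ℂ) - 4 * (ρ : ℂ) ^ 2 * (t : ℂ)) ^ 2 ≠ 0 := by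
  have h : (1 : ℂ) + 16 * (ρ : ℂ) ^ 4 * ((x : ℂ) - 4 * (ρ : ℂ) ^ 2 * (t : ℂ)) ^ 2
      = ((1 + 16*ρ^4*(x - 4*ρ^2*t)^2 : ℝ) : ℂ) := by push_cast; ring
  rw [h]
  exact_mod_cast (by positivity : (0:ℝ) < 1 + 16*ρ^4*(x - 4*ρ^2*t)^2).ne'

lemma dnls_factor (z : ℂ) :
    (1:ℂ) + 16*(ρ:ℂ)^4*z^2 = (1 - 4*I*(ρ:ℂ)^2*z) * (1 + 4*I*(ρ:ℂ)^2*z) := by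
  linear_combination (16*(ρ:ℂ)^4*z^2) * Complex.I_sq

lemma dnls_reduce (y t : ℝ) :
    4 * (ρ : ℂ) * (1 - 4 * Complex.I * (ρ : ℂ) ^ 2 * ((y : ℂ) - 4 * (ρ : ℂ) ^ 2 * (t : ℂ))) ^ 3
        / (1 + 16 * (ρ : ℂ) ^ 4 * ((y : ℂ) - 4 * (ρ : ℂ) ^ 2 * (t : ℂ)) ^ 2) ^ 2
        * Complex.exp (2 * Complex.I * (ρ : ℂ) ^ 2 * ((y : ℂ) - 2 * (ρ : ℂ) ^ 2 * (t : ℂ)))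
      = 4*(ρ:ℂ)*(1 - 4*I*(ρ:ℂ)^2*((y:ℂ) - 4*(ρ:ℂ)^2*(t:ℂ)))
          / (1 + 4*I*(ρ:ℂ)^2*((y:ℂ) - 4*(ρ:ℂ)^2*(t:ℂ)))^2
          * Complex.exp (2*I*(ρ:ℂ)^2*((y:ℂ) - 2*(ρ:ℂ)^2*(t:ℂ))) := by
  rw [dnls_factor]
  have h1 := dnls_ne_p ρ y t
  have h2 := dnls_ne_m ρ y t
  field_simp

set_option maxHeartbeats 1000000 in
lemma dnls_nl (y t : ℝ) :
    (4*(ρ:ℂ)*(1 - 4*I*(ρ:ℂ)^2*((y:ℂ) - 4*(ρ:ℂ)^2*(t:ℂ)))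
          / (1 + 4*I*(ρ:ℂ)^2*((y:ℂ) - 4*(ρ:ℂ)^2*(t:ℂ)))^2
          * Complex.exp (2*I*(ρ:ℂ)^2*((y:ℂ) - 2*(ρ:ℂ)^2*(t:ℂ))))^2
      * (starRingEnd ℂ) (4*(ρ:ℂ)*(1 - 4*I*(ρ:ℂ)^2*((y:ℂ) - 4*(ρ:ℂ)^2*(t:ℂ)))
          / (1 + 4*I*(ρ:ℂ)^2*((y:ℂ) - 4*(ρ:ℂ)^2*(t:ℂ)))^2
          * Complex.exp (2*I*(ρ:ℂ)^2*((y:ℂ) - 2*(ρ:ℂ)^2*(t:ℂ))))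
      = 64*(ρ:ℂ)^3 / (1 + 4*I*(ρ:ℂ)^2*((y:ℂ) - 4*(ρ:ℂ)^2*(t:ℂ)))^3
          * Complex.exp (2*I*(ρ:ℂ)^2*((y:ℂ) - 2*(ρ:ℂ)^2*(t:ℂ))) := by
  have h1 := dnls_ne_p ρ y t
  have h2 := dnls_ne_m ρ y t
  simp only [map_mul, map_div₀, map_pow, map_sub, map_add, map_one, map_ofNat,
    Complex.conj_ofReal, Complex.conj_I, ← Complex.exp_conj]
  rw [show 2 * -Complex.I * (ρ:ℂ)^2 * ((y:ℂ) - 2*(ρ:ℂ)^2*(t:ℂ))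
      = -(2*Complex.I*(ρ:ℂ)^2*((y:ℂ) - 2*(ρ:ℂ)^2*(t:ℂ))) from by ring, Complex.exp_neg]
  have h2' : (1:ℂ) + 4 * -Complex.I * (ρ:ℂ)^2 * ((y:ℂ) - 4*(ρ:ℂ)^2*(t:ℂ)) ≠ 0 := by
    rw [show (1:ℂ) + 4 * -Complex.I * (ρ:ℂ)^2 * ((y:ℂ) - 4*(ρ:ℂ)^2*(t:ℂ))
        = 1 - 4*Complex.I*(ρ:ℂ)^2*((y:ℂ) - 4*(ρ:ℂ)^2*(t:ℂ)) from by ring]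
    exact h2
  have key : (4*(ρ:ℂ)*(1 - 4*I*(ρ:ℂ)^2*((y:ℂ) - 4*(ρ:ℂ)^2*(t:ℂ)))
          / (1 + 4*I*(ρ:ℂ)^2*((y:ℂ) - 4*(ρ:ℂ)^2*(t:ℂ)))^2)^2
      * (4*(ρ:ℂ)*(1 - 4 * -Complex.I*(ρ:ℂ)^2*((y:ℂ) - 4*(ρ:ℂ)^2*(t:ℂ)))
          / (1 + 4 * -Complex.I*(ρ:ℂ)^2*((y:ℂ) - 4*(ρ:ℂ)^2*(t:ℂ)))^2)
      = 64*(ρ:ℂ)^3 / (1 + 4*I*(ρ:ℂ)^2*((y:ℂ) - 4*(ρ:ℂ)^2*(t:ℂ)))^3 := by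
    rw [div_pow, div_mul_div_comm, div_eq_div_iff
      (mul_ne_zero (pow_ne_zero 2 (pow_ne_zero 2 h1)) (pow_ne_zero 2 h2'))
      (pow_ne_zero 3 h1)]
    ring
  have hexp' : Complex.exp (2*I*(ρ:ℂ)^2*((y:ℂ) - 2*(ρ:ℂ)^2*(t:ℂ)))^2
      * (Complex.exp (2*I*(ρ:ℂ)^2*((y:ℂ) - 2*(ρ:ℂ)^2*(t:ℂ))))⁻¹
      = Complex.exp (2*I*(ρ:ℂ)^2*((y:ℂ) - 2*(ρ:ℂ)^2*(t:ℂ))) := by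
    rw [sq, mul_assoc, mul_inv_cancel₀ (Complex.exp_ne_zero _), mul_one]
  calc _ = ((4*(ρ:ℂ)*(1 - 4*I*(ρ:ℂ)^2*((y:ℂ) - 4*(ρ:ℂ)^2*(t:ℂ)))
          / (1 + 4*I*(ρ:ℂ)^2*((y:ℂ) - 4*(ρ:ℂ)^2*(t:ℂ)))^2)^2
      * (4*(ρ:ℂ)*(1 - 4 * -Complex.I*(ρ:ℂ)^2*((y:ℂ) - 4*(ρ:ℂ)^2*(t:ℂ)))
          / (1 + 4 * -Complex.I*(ρ:ℂ)^2*((y:ℂ) - 4*(ρ:ℂ)^2*(t:ℂ)))^2))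
      * (Complex.exp (2*I*(ρ:ℂ)^2*((y:ℂ) - 2*(ρ:ℂ)^2*(t:ℂ)))^2
      * (Complex.exp (2*I*(ρ:ℂ)^2*((y:ℂ) - 2*(ρ:ℂ)^2*(t:ℂ))))⁻¹) := by ring
    _ = _ := by rw [hexp', key]

end


set_option maxHeartbeats 4000000 in
/-- The rational solution of DNLS "+" obtained from a pair of imaginary poles `±iρ`:
`q = 4ρ (1 - 4iρ²(x-4ρ²t))³ / (1 + 16ρ⁴(x-4ρ²t)²)² e^{2iρ²(x-2ρ²t)}` is smooth
(with nonvanishing denominator) and solves `i qₜ + qₓₓ + i (q² q*)ₓ = 0`. -/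
theorem dnls_plus_rational_solution (ρ : ℝ) (hρ : 0 < ρ)
    (q : ℝ × ℝ → ℂ)
    (hq : ∀ x t : ℝ, q (x, t) =
      4 * (ρ : ℂ) * (1 - 4 * Complex.I * (ρ : ℂ) ^ 2 * ((x : ℂ) - 4 * (ρ : ℂ) ^ 2 * (t : ℂ))) ^ 3
        / (1 + 16 * (ρ : ℂ) ^ 4 * ((x : ℂ) - 4 * (ρ : ℂ) ^ 2 * (t : ℂ)) ^ 2) ^ 2
        * Complex.exp (2 * Complex.I * (ρ : ℂ) ^ 2 * ((x : ℂ) - 2 * (ρ : ℂ) ^ 2 * (t : ℂ)))) :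
    (∀ x t : ℝ, (1 : ℂ) + 16 * (ρ : ℂ) ^ 4 * ((x : ℂ) - 4 * (ρ : ℂ) ^ 2 * (t : ℂ)) ^ 2 ≠ 0) ∧
    ContDiff ℝ (⊤ : ℕ∞) q ∧
    (∀ x t : ℝ,
      Complex.I * pdt q x t + pdx (fun p => pdx q p.1 p.2) x t
        + Complex.I * pdx (fun p => q p ^ 2 * starRingEnd ℂ (q p)) x t = 0) := by
  have hq' : ∀ y t : ℝ, q (y, t) = 4*(ρ:ℂ)*(1 - 4*I*(ρ:ℂ)^2*((y:ℂ) - 4*(ρ:ℂ)^2*(t:ℂ))) / (1 + 4*I*(ρ:ℂ)^2*((y:ℂ) - 4*(ρ:ℂ)^2*(t:ℂ)))^2 * Complex.exp (2*I*(ρ:ℂ)^2*((y:ℂ) - 2*(ρ:ℂ)^2*(t:ℂ))) :=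
    fun y t => (hq y t).trans (dnls_reduce ρ y t)
  refine ⟨dnls_den ρ, ?_, ?_⟩
  · have hqe : q = fun p : ℝ × ℝ =>
        4 * (ρ : ℂ) * (1 - 4 * Complex.I * (ρ : ℂ) ^ 2 * ((p.1 : ℂ) - 4 * (ρ : ℂ) ^ 2 * (p.2 : ℂ))) ^ 3
          / (1 + 16 * (ρ : ℂ) ^ 4 * ((p.1 : ℂ) - 4 * (ρ : ℂ) ^ 2 * (p.2 : ℂ)) ^ 2) ^ 2
          * Complex.exp (2 * Complex.I * (ρ : ℂ) ^ 2 * ((p.1 : ℂ) - 2 * (ρ : ℂ) ^ 2 * (p.2 : ℂ))) := by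
      funext p
      exact hq p.1 p.2
    rw [hqe]
    simp only [div_eq_mul_inv]
    have h1 : ContDiff ℝ (⊤ : ℕ∞) (fun p : ℝ × ℝ => ((p.1 : ℝ) : ℂ)) :=
      Complex.ofRealCLM.contDiff.comp contDiff_fst
    have h2 : ContDiff ℝ (⊤ : ℕ∞) (fun p : ℝ × ℝ => ((p.2 : ℝ) : ℂ)) :=
      Complex.ofRealCLM.contDiff.comp contDiff_snd
    have hu : ContDiff ℝ (⊤ : ℕ∞)
        (fun p : ℝ × ℝ => ((p.1 : ℂ) - 4 * (ρ : ℂ) ^ 2 * (p.2 : ℂ))) :=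
      h1.sub (contDiff_const.mul h2)
    have hnum : ContDiff ℝ (⊤ : ℕ∞) (fun p : ℝ × ℝ =>
        4 * (ρ : ℂ) * (1 - 4 * Complex.I * (ρ : ℂ) ^ 2 * ((p.1 : ℂ) - 4 * (ρ : ℂ) ^ 2 * (p.2 : ℂ))) ^ 3) :=
      contDiff_const.mul ((contDiff_const.sub (contDiff_const.mul hu)).pow 3)
    have hden2 : ContDiff ℝ (⊤ : ℕ∞) (fun p : ℝ × ℝ =>
        ((1 + 16 * (ρ : ℂ) ^ 4 * ((p.1 : ℂ) - 4 * (ρ : ℂ) ^ 2 * (p.2 : ℂ)) ^ 2) ^ 2)⁻¹) :=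
      ((contDiff_const.add (contDiff_const.mul (hu.pow 2))).pow 2).inv
        (fun p => pow_ne_zero 2 (dnls_den ρ p.1 p.2))
    have hexp : ContDiff ℝ (⊤ : ℕ∞) (fun p : ℝ × ℝ =>
        Complex.exp (2 * Complex.I * (ρ : ℂ) ^ 2 * ((p.1 : ℂ) - 2 * (ρ : ℂ) ^ 2 * (p.2 : ℂ)))) :=
      Complex.contDiff_exp.comp (contDiff_const.mul (h1.sub (contDiff_const.mul h2)))
    exact (hnum.mul hden2).mul hexp
  · intro x t
    have h0 := dnls_ne_p ρ x t
    have hT : pdt q x t = 4*(ρ:ℂ)^3*(4*I*(ρ:ℂ)^2)*((4*I*(ρ:ℂ)^2*((x:ℂ) - 4*(ρ:ℂ)^2*(t:ℂ)))^2 - 4*(4*I*(ρ:ℂ)^2*((x:ℂ) - 4*(ρ:ℂ)^2*(t:ℂ))) + 11)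
          / (1 + 4*I*(ρ:ℂ)^2*((x:ℂ) - 4*(ρ:ℂ)^2*(t:ℂ)))^3
          * Complex.exp (2*I*(ρ:ℂ)^2*((x:ℂ) - 2*(ρ:ℂ)^2*(t:ℂ))) := by
      show deriv (fun s : ℝ => q (x, s)) t = _
      rw [show (fun s : ℝ => q (x, s)) = (fun s : ℝ =>
          4*(ρ:ℂ)*(1 - 4*I*(ρ:ℂ)^2*((x:ℂ) - 4*(ρ:ℂ)^2*(s:ℂ))) / (1 + 4*I*(ρ:ℂ)^2*((x:ℂ) - 4*(ρ:ℂ)^2*(s:ℂ)))^2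
            * Complex.exp (2*I*(ρ:ℂ)^2*((x:ℂ) - 2*(ρ:ℂ)^2*(s:ℂ)))) from funext fun s => hq' x s]
      exact (dnls_L4 ((ρ:ℂ)) t x h0).deriv
    have hX : ∀ y : ℝ, pdx q y t = 2*(ρ:ℂ)*(4*I*(ρ:ℂ)^2)*(2*(4*I*(ρ:ℂ)^2*((y:ℂ) - 4*(ρ:ℂ)^2*(t:ℂ))) - 5 - (4*I*(ρ:ℂ)^2*((y:ℂ) - 4*(ρ:ℂ)^2*(t:ℂ)))^2)
          / (1 + 4*I*(ρ:ℂ)^2*((y:ℂ) - 4*(ρ:ℂ)^2*(t:ℂ)))^3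
          * Complex.exp (2*I*(ρ:ℂ)^2*((y:ℂ) - 2*(ρ:ℂ)^2*(t:ℂ))) := by
      intro y
      show deriv (fun z : ℝ => q (z, t)) y = _
      rw [show (fun z : ℝ => q (z, t)) = (fun z : ℝ => 4*(ρ:ℂ)*(1 - 4*I*(ρ:ℂ)^2*((z:ℂ) - 4*(ρ:ℂ)^2*(t:ℂ))) / (1 + 4*I*(ρ:ℂ)^2*((z:ℂ) - 4*(ρ:ℂ)^2*(t:ℂ)))^2 * Complex.exp (2*I*(ρ:ℂ)^2*((z:ℂ) - 2*(ρ:ℂ)^2*(t:ℂ)))) from funext fun z => hq' z t]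
      exact (dnls_L1 ((ρ:ℂ)) t y (dnls_ne_p ρ y t)).deriv
    have hXX : pdx (fun p => pdx q p.1 p.2) x t = (ρ:ℂ)*(4*I*(ρ:ℂ)^2)^2*(-(4*I*(ρ:ℂ)^2*((x:ℂ) - 4*(ρ:ℂ)^2*(t:ℂ)))^3 + 3*(4*I*(ρ:ℂ)^2*((x:ℂ) - 4*(ρ:ℂ)^2*(t:ℂ)))^2
            - 15*(4*I*(ρ:ℂ)^2*((x:ℂ) - 4*(ρ:ℂ)^2*(t:ℂ))) + 29)
          / (1 + 4*I*(ρ:ℂ)^2*((x:ℂ) - 4*(ρ:ℂ)^2*(t:ℂ)))^4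
          * Complex.exp (2*I*(ρ:ℂ)^2*((x:ℂ) - 2*(ρ:ℂ)^2*(t:ℂ))) := by
      show deriv (fun y : ℝ => pdx q y t) x = _
      rw [show (fun y : ℝ => pdx q y t) = (fun y : ℝ => 2*(ρ:ℂ)*(4*I*(ρ:ℂ)^2)*(2*(4*I*(ρ:ℂ)^2*((y:ℂ) - 4*(ρ:ℂ)^2*(t:ℂ))) - 5 - (4*I*(ρ:ℂ)^2*((y:ℂ) - 4*(ρ:ℂ)^2*(t:ℂ)))^2)
          / (1 + 4*I*(ρ:ℂ)^2*((y:ℂ) - 4*(ρ:ℂ)^2*(t:ℂ)))^3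
          * Complex.exp (2*I*(ρ:ℂ)^2*((y:ℂ) - 2*(ρ:ℂ)^2*(t:ℂ)))) from funext fun y => hX y]
      exact (dnls_L2 ((ρ:ℂ)) t x h0).deriv
    have hNL : pdx (fun p => q p ^ 2 * starRingEnd ℂ (q p)) x t = 32*(ρ:ℂ)^3*(4*I*(ρ:ℂ)^2)*((4*I*(ρ:ℂ)^2*((x:ℂ) - 4*(ρ:ℂ)^2*(t:ℂ))) - 5)
          / (1 + 4*I*(ρ:ℂ)^2*((x:ℂ) - 4*(ρ:ℂ)^2*(t:ℂ)))^4
          * Complex.exp (2*I*(ρ:ℂ)^2*((x:ℂ) - 2*(ρ:ℂ)^2*(t:ℂ))) := by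
      show deriv (fun y : ℝ => q (y, t) ^ 2 * (starRingEnd ℂ) (q (y, t))) x = _
      rw [show (fun y : ℝ => q (y, t) ^ 2 * (starRingEnd ℂ) (q (y, t)))
          = (fun y : ℝ => 64*(ρ:ℂ)^3 / (1 + 4*I*(ρ:ℂ)^2*((y:ℂ) - 4*(ρ:ℂ)^2*(t:ℂ)))^3 * Complex.exp (2*I*(ρ:ℂ)^2*((y:ℂ) - 2*(ρ:ℂ)^2*(t:ℂ)))) from funext fun y => by
            rw [hq' y t]; exact dnls_nl ρ y t]
      exact (dnls_L3 ((ρ:ℂ)) t x h0).deriv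
    rw [hT, hXX, hNL]
    have hE := Complex.exp_ne_zero (2*I*(ρ:ℂ)^2*((x:ℂ) - 2*(ρ:ℂ)^2*(t:ℂ)))
    field_simp
    ring
end
end

section
/- Let m, n be positive integers, ε₁,…,ε_{m+n} ∈ {+1,−1}, ρ > 0, and set v = (m+n)ρ²/m. Let 𝓕 ∈ ℂ^{m+n} satisfy Σ_{p=1}^m εₚ|𝓕ₚ|² = 1 and Σ_{p=m+1}^{m+n} εₚ|𝓕ₚ|² = −1. Define D(x,t) = 2iv(x + 2vt) − 1 (which never vanishes) and the n×m matrix-valued function q, with row index b ∈ {1,…,n} and column index a ∈ {1,…,m}, by q_{ba}(x,t) = (2v/ρ) e^{−iv(x + vt)} Σ_{k=m+1}^{m+n} ε_a ε_k ε_{b+m} · conj(𝓕_a) 𝓕_k / D(x,t) · ( δ_{k, b+m} − 2 ε_{b+m} 𝓕_{b+m} conj(𝓕_k) / D(x,t) ). Then q is smooth and satisfies the multi-component derivative nonlinear Schrödinger equation i∂ₜq + ∂ₓₓq + (2mi/(m+n)) ∂ₓ( q 𝓔ₘ q† 𝓔ₙ q ) = 0 on ℝ², where 𝓔ₘ = diag(ε₁,…,ε_m)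 and 𝓔ₙ = diag(ε_{m+1},…,ε_{m+n}). -/
noncomputable section

open Matrix

/-- Entrywise partial `x`-derivative of an `n×m` matrix-valued function on `ℝ×ℝ`. -/
def mpdx {n m : ℕ} (M : ℝ × ℝ → Matrix (Fin n) (Fin m) ℂ) (p : ℝ × ℝ) :
    Matrix (Fin n) (Fin m) ℂ :=
  Matrix.of fun b a => deriv (fun y => M (y, p.2) b a) p.1

/-- Entrywise partial `t`-derivative of an `n×m` matrix-valued function on `ℝ×ℝ`. -/
def mpdt {n m : ℕ} (M : ℝ × ℝ → Matrix (Fin n) (Fin m) ℂ) (p : ℝ × ℝ) :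
    Matrix (Fin n) (Fin m) ℂ :=
  Matrix.of fun b a => deriv (fun s => M (p.1, s) b a) p.2

namespace DNLSaux
open Complex

def Dc (v x t : ℝ) : ℂ := 2 * Complex.I * (v : ℂ) * ((x : ℂ) + 2 * (v : ℂ) * (t : ℂ)) - 1

def Ec (v x t : ℝ) : ℂ := Complex.exp (-Complex.I * (v : ℂ) * ((x : ℂ) + (v : ℂ) * (t : ℂ)))

lemma Dc_ne (v x t : ℝ) : Dc v x t ≠ 0 := by
  intro h
  have h' := congrArg Complex.re h
  simp [Dc, Complex.mul_re, Complex.mul_im] at h'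

lemma Ec_ne (v x t : ℝ) : Ec v x t ≠ 0 := Complex.exp_ne_zero _

lemma hasDerivAt_ofReal (x : ℝ) : HasDerivAt (fun y : ℝ => (y : ℂ)) 1 x := by
  exact Complex.ofRealCLM.hasDerivAt (x := x)

lemma hD_x (v t x : ℝ) : HasDerivAt (fun y : ℝ => Dc v y t) (2 * Complex.I * v) x := by
  have h := (((hasDerivAt_ofReal x).add_const (2 * (v:ℂ) * (t:ℝ))).const_mul
      (2 * Complex.I * (v:ℂ))).sub_const 1
  simpa [Dc] using h

lemma hD_t (v x t : ℝ) : HasDerivAt (fun s : ℝ => Dc v x s) (4 * Complex.I * v ^ 2) t := by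
  have h0 : HasDerivAt (fun s : ℝ => ((x:ℂ) + 2 * (v:ℂ) * (s:ℝ))) (2 * (v:ℂ)) t := by
    simpa using ((hasDerivAt_ofReal t).const_mul (2 * (v:ℂ))).const_add (x:ℂ)
  have h := (h0.const_mul (2 * Complex.I * (v:ℂ))).sub_const 1
  have e : (2 * Complex.I * (v:ℂ)) * (2 * (v:ℂ)) = 4 * Complex.I * v ^ 2 := by ring
  simpa [Dc, e] using h

lemma hE_x (v t x : ℝ) : HasDerivAt (fun y : ℝ => Ec v y t) (Ec v x t * (-Complex.I * v)) x := by
  have h0 : HasDerivAt (fun y : ℝ => (-Complex.I * (v:ℂ) * ((y:ℝ) + (v:ℂ) * (t:ℝ)))) (-Complex.I * v) x := by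
    simpa using ((hasDerivAt_ofReal x).add_const ((v:ℂ) * (t:ℝ))).const_mul (-Complex.I * (v:ℂ))
  simpa [Ec] using h0.cexp

lemma hE_t (v x t : ℝ) : HasDerivAt (fun s : ℝ => Ec v x s) (Ec v x t * (-Complex.I * v ^ 2)) t := by
  have h0 : HasDerivAt (fun s : ℝ => (-Complex.I * (v:ℂ) * ((x:ℝ) + (v:ℂ) * (s:ℝ)))) (-Complex.I * v ^ 2) t := by
    have h := (((hasDerivAt_ofReal t).const_mul ((v:ℂ))).const_add (x:ℂ)).const_mul (-Complex.I * (v:ℂ))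
    convert h using 1
    · rfl
    · ring
  simpa [Ec] using h0.cexp


def gc (A v x t : ℝ) : ℂ := (A:ℂ) * Ec v x t * (Dc v x t + 2) / (Dc v x t) ^ 2

def g1 (A v x t : ℝ) : ℂ := (A:ℂ) * Ec v x t *
    (-Complex.I * v * (Dc v x t + 2) * Dc v x t + 2 * Complex.I * v * Dc v x t
      - 4 * Complex.I * v * (Dc v x t + 2)) / (Dc v x t) ^ 3

def g2 (A v x t : ℝ) : ℂ := (A:ℂ) * Ec v x t * (v:ℂ) ^ 2 *
    (-(Dc v x t + 2) * Dc v x t ^ 2 + 4 * Dc v x t ^ 2 - 8 * (Dc v x t + 2) * Dc v x t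
      + 16 * Dc v x t - 24 * (Dc v x t + 2)) / (Dc v x t) ^ 4

def gT (A v x t : ℝ) : ℂ := (A:ℂ) * Ec v x t * Complex.I * (v:ℂ) ^ 2 *
    (-(Dc v x t + 2) * Dc v x t + 4 * Dc v x t - 8 * (Dc v x t + 2)) / (Dc v x t) ^ 3

def Nc (A v x t : ℝ) : ℂ := (A:ℂ) ^ 3 * Ec v x t / (Dc v x t) ^ 3

def N1 (A v x t : ℝ) : ℂ := (A:ℂ) ^ 3 * Ec v x t * (-Complex.I * v) * (Dc v x t + 6) / (Dc v x t) ^ 4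

lemma hg_x (A v t x : ℝ) : HasDerivAt (fun y : ℝ => gc A v y t) (g1 A v x t) x := by
  have hnum : HasDerivAt (fun y : ℝ => (A:ℂ) * Ec v y t * (Dc v y t + 2))
      ((A:ℂ) * (Ec v x t * (-Complex.I * v)) * (Dc v x t + 2)
        + (A:ℂ) * Ec v x t * (2 * Complex.I * v)) x :=
    (((hE_x v t x).const_mul (A:ℂ)).mul ((hD_x v t x).add_const 2))
  have hden : HasDerivAt (fun y : ℝ => (Dc v y t) ^ 2)
      ((2:ℂ) * Dc v x t ^ 1 * (2 * Complex.I * v)) x := by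
    have := (hasDerivAt_pow 2 (Dc v x t)).comp x (hD_x v t x)
    simp [Function.comp] at this
    simp only [pow_one]
    exact this
  have h := hnum.div hden (pow_ne_zero 2 (Dc_ne v x t))
  convert h using 1
  · rfl
  · rfl
  unfold g1
  field_simp [Dc_ne v x t]
  ring_nf
  try simp only [Complex.I_sq]
  try ring_nf

lemma hg_t (A v x t : ℝ) : HasDerivAt (fun s : ℝ => gc A v x s) (gT A v x t) t := by
  have hnum : HasDerivAt (fun s : ℝ => (A:ℂ) * Ec v x s * (Dc v x s + 2))
      ((A:ℂ) * (Ec v x t * (-Complex.I * v ^ 2)) * (Dc v x t + 2)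
        + (A:ℂ) * Ec v x t * (4 * Complex.I * v ^ 2)) t :=
    (((hE_t v x t).const_mul (A:ℂ)).mul ((hD_t v x t).add_const 2))
  have hden : HasDerivAt (fun s : ℝ => (Dc v x s) ^ 2)
      ((2:ℂ) * Dc v x t ^ 1 * (4 * Complex.I * v ^ 2)) t := by
    have := (hasDerivAt_pow 2 (Dc v x t)).comp t (hD_t v x t)
    simp [Function.comp] at this
    simp only [pow_one]
    exact this
  have h := hnum.div hden (pow_ne_zero 2 (Dc_ne v x t))
  convert h using 1
  · rfl
  · rfl
  unfold gT
  field_simp [Dc_ne v x t]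
  ring_nf
  try simp only [Complex.I_sq]
  try ring_nf

lemma hg1_x (A v t x : ℝ) : HasDerivAt (fun y : ℝ => g1 A v y t) (g2 A v x t) x := by
  have hP : HasDerivAt (fun y : ℝ =>
      (-Complex.I * v * (Dc v y t + 2) * Dc v y t + 2 * Complex.I * v * Dc v y t
        - 4 * Complex.I * v * (Dc v y t + 2)))
      ((-Complex.I * v) * ((2 * Complex.I * v) * Dc v x t + (Dc v x t + 2) * (2 * Complex.I * v))
        + 2 * Complex.I * v * (2 * Complex.I * v) - 4 * Complex.I * v * (2 * Complex.I * v)) x := by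
    have t1 := (((hD_x v t x).add_const 2).mul (hD_x v t x)).const_mul (-Complex.I * (v:ℂ))
    have t2 := (hD_x v t x).const_mul (2 * Complex.I * (v:ℂ))
    have t3 := ((hD_x v t x).add_const 2).const_mul (4 * Complex.I * (v:ℂ))
    have := (t1.add t2).sub t3
    convert this using 2
    · rfl
    · simp only [Pi.add_apply, Pi.sub_apply, Pi.mul_apply]
      ring
  have hnum := ((hE_x v t x).const_mul (A:ℂ)).mul hP
  have hden : HasDerivAt (fun y : ℝ => (Dc v y t) ^ 3)
      ((3:ℂ) * Dc v x t ^ 2 * (2 * Complex.I * v)) x := by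
    have := (hasDerivAt_pow 3 (Dc v x t)).comp x (hD_x v t x)
    simp [Function.comp] at this
    exact this
  have h := hnum.div hden (pow_ne_zero 3 (Dc_ne v x t))
  convert h using 1
  · rfl
  · rfl
  unfold g2
  simp only [Pi.mul_apply]
  field_simp [Dc_ne v x t]
  ring_nf
  try simp only [Complex.I_sq]
  try ring_nf

lemma hN_x (A v t x : ℝ) : HasDerivAt (fun y : ℝ => Nc A v y t) (N1 A v x t) x := by
  have hnum : HasDerivAt (fun y : ℝ => (A:ℂ) ^ 3 * Ec v y t)
      ((A:ℂ) ^ 3 * (Ec v x t * (-Complex.I * v))) x := (hE_x v t x).const_mul _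
  have hden : HasDerivAt (fun y : ℝ => (Dc v y t) ^ 3)
      ((3:ℂ) * Dc v x t ^ 2 * (2 * Complex.I * v)) x := by
    have := (hasDerivAt_pow 3 (Dc v x t)).comp x (hD_x v t x)
    simp [Function.comp] at this
    exact this
  have h := hnum.div hden (pow_ne_zero 3 (Dc_ne v x t))
  convert h using 1
  · rfl
  · rfl
  unfold N1
  field_simp [Dc_ne v x t]
  ring_nf
  try simp only [Complex.I_sq]
  try ring_nf


lemma conj_Dc (v x t : ℝ) : (starRingEnd ℂ) (Dc v x t) = -Dc v x t - 2 := by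
  simp only [Dc, map_sub, _root_.map_mul, _root_.map_add, _root_.map_one, _root_.map_ofNat, Complex.conj_ofReal, Complex.conj_I]
  ring

lemma conj_Ec (v x t : ℝ) : (starRingEnd ℂ) (Ec v x t) = (Ec v x t)⁻¹ := by
  have h : Ec v x t * (starRingEnd ℂ) (Ec v x t) = 1 := by
    rw [Ec, ← Complex.exp_conj, ← Complex.exp_add]
    simp only [_root_.map_mul, _root_.map_add, Complex.conj_ofReal, Complex.conj_I, map_neg]
    rw [show -Complex.I * (v:ℂ) * ((x:ℂ) + (v:ℂ) * (t:ℂ)) + -(-Complex.I) * (v:ℂ) * ((x:ℂ) + (v:ℂ) * (t:ℂ)) = 0 by ring]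
    exact Complex.exp_zero
  field_simp [Ec_ne v x t]
  linear_combination h

lemma cube (A v x t : ℝ) : gc A v x t ^ 2 * (starRingEnd ℂ) (gc A v x t) = -Nc A v x t := by
  unfold gc Nc
  rw [map_div₀]
  simp only [_root_.map_mul, _root_.map_add, map_pow, _root_.map_ofNat, Complex.conj_ofReal, conj_Dc, conj_Ec]
  have h1 := Dc_ne v x t
  have h2 := Ec_ne v x t
  have h3 : -Dc v x t - 2 ≠ 0 := by
    intro h
    have h' := congrArg Complex.re h
    simp [Dc, Complex.mul_re, Complex.mul_im] at h'
    linarith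
  field_simp
  ring


lemma contDiff_Dc (v : ℝ) : ContDiff ℝ (⊤ : ℕ∞) (fun p : ℝ × ℝ => Dc v p.1 p.2) := by
  unfold Dc
  have h1 : ContDiff ℝ (⊤ : ℕ∞) (fun p : ℝ × ℝ => ((p.1 : ℂ))) :=
    Complex.ofRealCLM.contDiff.comp contDiff_fst
  have h2 : ContDiff ℝ (⊤ : ℕ∞) (fun p : ℝ × ℝ => ((p.2 : ℂ))) :=
    Complex.ofRealCLM.contDiff.comp contDiff_snd
  exact ((contDiff_const.mul (h1.add (contDiff_const.mul h2)))).sub contDiff_const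

lemma contDiff_Ec (v : ℝ) : ContDiff ℝ (⊤ : ℕ∞) (fun p : ℝ × ℝ => Ec v p.1 p.2) := by
  unfold Ec
  have h1 : ContDiff ℝ (⊤ : ℕ∞) (fun p : ℝ × ℝ => ((p.1 : ℂ))) :=
    Complex.ofRealCLM.contDiff.comp contDiff_fst
  have h2 : ContDiff ℝ (⊤ : ℕ∞) (fun p : ℝ × ℝ => ((p.2 : ℂ))) :=
    Complex.ofRealCLM.contDiff.comp contDiff_snd
  exact Complex.contDiff_exp.comp (contDiff_const.mul (h1.add (contDiff_const.mul h2)))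

lemma contDiff_gc (A v : ℝ) : ContDiff ℝ (⊤ : ℕ∞) (fun p : ℝ × ℝ => gc A v p.1 p.2) := by
  unfold gc
  have hnum : ContDiff ℝ (⊤ : ℕ∞) (fun p : ℝ × ℝ => (A:ℂ) * Ec v p.1 p.2 * (Dc v p.1 p.2 + 2)) :=
    (contDiff_const.mul (contDiff_Ec v)).mul ((contDiff_Dc v).add contDiff_const)
  have hden : ContDiff ℝ (⊤ : ℕ∞) (fun p : ℝ × ℝ => (Dc v p.1 p.2) ^ 2) := by
    have h := (contDiff_Dc v).mul (contDiff_Dc v)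
    have e : (fun p : ℝ × ℝ => (Dc v p.1 p.2) ^ 2) = fun p : ℝ × ℝ => Dc v p.1 p.2 * Dc v p.1 p.2 := by
      funext p; rw [pow_two]
    rw [e]; exact h
  have hinv : ContDiff ℝ (⊤ : ℕ∞) (fun p : ℝ × ℝ => ((Dc v p.1 p.2) ^ 2)⁻¹) :=
    hden.inv fun p => pow_ne_zero 2 (Dc_ne v p.1 p.2)
  have e2 : (fun p : ℝ × ℝ => (A:ℂ) * Ec v p.1 p.2 * (Dc v p.1 p.2 + 2) / Dc v p.1 p.2 ^ 2)
      = fun p : ℝ × ℝ => ((A:ℂ) * Ec v p.1 p.2 * (Dc v p.1 p.2 + 2)) * ((Dc v p.1 p.2 ^ 2)⁻¹) := by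
    funext p; rw [div_eq_mul_inv]
  rw [e2]
  exact hnum.mul hinv

lemma core (a w d e c : ℂ) (hd : d ≠ 0) (hrel : c * a ^ 2 = 8 * w) :
    Complex.I * (a * e * Complex.I * w ^ 2 * (-(d + 2) * d + 4 * d - 8 * (d + 2)) / d ^ 3)
      + a * e * w ^ 2 * (-(d + 2) * d ^ 2 + 4 * d ^ 2 - 8 * (d + 2) * d + 16 * d - 24 * (d + 2)) / d ^ 4
      + c * (a ^ 3 * e * w * (d + 6) / d ^ 4) = 0 := by
  field_simp
  linear_combination (a * e * w * (d + 6)) * hrel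
    + (a * e * w ^ 2 * (d * (d * (-(d + 2) + 4) - (d + 2) * 8))) * Complex.I_sq

lemma scalar_id (m n : ℕ) (hm : 0 < m) (hn : 0 < n) (ρ : ℝ) (hρ : 0 < ρ) (v : ℝ)
    (hv : v = (m + n) * ρ ^ 2 / m) (x t : ℝ) :
    Complex.I * gT (2 * v / ρ) v x t + g2 (2 * v / ρ) v x t
      + (2 * (m : ℂ) * Complex.I / ((m : ℂ) + (n : ℂ))) * N1 (2 * v / ρ) v x t = 0 := by
  have hd := Dc_ne v x t
  have hmc : (m : ℂ) ≠ 0 := Nat.cast_ne_zero.mpr hm.ne'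
  have hρc : (ρ : ℂ) ≠ 0 := Complex.ofReal_ne_zero.mpr hρ.ne'
  have hmn : (m : ℂ) + (n : ℂ) ≠ 0 := by
    have h : ((m + n : ℕ) : ℂ) ≠ 0 := Nat.cast_ne_zero.mpr (by omega)
    push_cast at h
    exact h
  set a : ℂ := ((2 * v / ρ : ℝ) : ℂ) with ha
  set w : ℂ := ((v : ℝ) : ℂ) with hw
  set d : ℂ := Dc v x t with hdd
  set e : ℂ := Ec v x t with hee
  set c : ℂ := 2 * (m : ℂ) / ((m : ℂ) + (n : ℂ)) with hc
  have hrel : c * a ^ 2 = 8 * w := by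
    rw [hc, ha, hw, hv]
    have hmr : (m : ℝ) ≠ 0 := Nat.cast_ne_zero.mpr hm.ne'
    have hρr : ρ ≠ 0 := hρ.ne'
    push_cast
    field_simp
    ring
  have hcore := core a w d e c hd hrel
  unfold gT g2 N1
  rw [← ha, ← hw, ← hdd, ← hee]
  rw [show 2 * (m : ℂ) * Complex.I / ((m : ℂ) + (n : ℂ)) * (a ^ 3 * e * (-Complex.I * w) * (d + 6) / d ^ 4)
      = c * (a ^ 3 * e * w * (d + 6) / d ^ 4) - (c * (a ^ 3 * e * w * (d + 6) / d ^ 4)) * (Complex.I ^ 2 + 1) from by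
    rw [hc]; ring]
  rw [Complex.I_sq]
  linear_combination hcore

end DNLSaux

/-- The rational solution of the multi-component DNLS related to
`SU(m+n)/S(U(m)×U(n))` obtained from a pair of real poles `±ρ` with normalized
polarization vector `𝓕`: it is smooth and solves
`i qₜ + qₓₓ + (2mi/(m+n)) (q 𝓔ₘ q† 𝓔ₙ q)ₓ = 0`. -/
theorem multicomponent_dnls_rational_real_poles (m n : ℕ) (hm : 0 < m) (hn : 0 < n)
    (εv : Fin (m + n) → ℝ) (hε : ∀ p, εv p = 1 ∨ εv p = -1)
    (ρ : ℝ) (hρ : 0 < ρ) (v : ℝ) (hv : v = (m + n) * ρ ^ 2 / m)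
    (𝓕 : Fin (m + n) → ℂ)
    (h1 : ∑ p : Fin m, εv (Fin.castAdd n p) * Complex.normSq (𝓕 (Fin.castAdd n p)) = 1)
    (h2 : ∑ p : Fin n, εv (Fin.natAdd m p) * Complex.normSq (𝓕 (Fin.natAdd m p)) = -1)
    (D : ℝ → ℝ → ℂ)
    (hD : ∀ x t : ℝ, D x t = 2 * Complex.I * (v : ℂ) * ((x : ℂ) + 2 * (v : ℂ) * (t : ℂ)) - 1)
    (q : ℝ × ℝ → Matrix (Fin n) (Fin m) ℂ)
    (hq : ∀ (x t : ℝ) (b : Fin n) (a : Fin m), q (x, t) b a =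
      ((2 * v / ρ : ℝ) : ℂ) * Complex.exp (-Complex.I * (v : ℂ) * ((x : ℂ) + (v : ℂ) * (t : ℂ)))
        * ∑ k : Fin n,
          ((εv (Fin.castAdd n a) * εv (Fin.natAdd m k) * εv (Fin.natAdd m b) : ℝ) : ℂ)
            * (starRingEnd ℂ (𝓕 (Fin.castAdd n a)) * 𝓕 (Fin.natAdd m k)) / D x t
            * ((if k = b then 1 else 0)
              - 2 * ((εv (Fin.natAdd m b) : ℝ) : ℂ) * 𝓕 (Fin.natAdd m b)
                * starRingEnd ℂ (𝓕 (Fin.natAdd m k)) / D x t)) :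
    (∀ x t : ℝ, D x t ≠ 0) ∧
    (∀ (b : Fin n) (a : Fin m), ContDiff ℝ (⊤ : ℕ∞) fun p : ℝ × ℝ => q p b a) ∧
    (∀ p : ℝ × ℝ,
      Complex.I • mpdt q p + mpdx (fun p' => mpdx q p') p
        + ((2 * (m : ℂ) * Complex.I) / ((m : ℂ) + (n : ℂ))) •
          mpdx (fun p' =>
            q p' * Matrix.diagonal (fun a : Fin m => ((εv (Fin.castAdd n a) : ℝ) : ℂ))
              * (q p')ᴴ * Matrix.diagonal (fun b : Fin n => ((εv (Fin.natAdd m b) : ℝ) : ℂ))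
              * q p') p = 0) := by
  classical
  have hDD : ∀ x t : ℝ, D x t = DNLSaux.Dc v x t := fun x t => (hD x t).trans rfl
  have hDne : ∀ x t : ℝ, D x t ≠ 0 := by
    intro x t; rw [hDD]; exact DNLSaux.Dc_ne v x t
  have hsqc : ∀ p : Fin (m + n), ((εv p : ℝ) : ℂ) * ((εv p : ℝ) : ℂ) = 1 := by
    intro p; rcases hε p with h | h <;> rw [h] <;> norm_num
  have h1c : ∑ a : Fin m, ((εv (Fin.castAdd n a) : ℝ) : ℂ)
      * (𝓕 (Fin.castAdd n a) * starRingEnd ℂ (𝓕 (Fin.castAdd n a))) = 1 := by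
    simp only [Complex.mul_conj]
    exact_mod_cast h1
  have h2c : ∑ k : Fin n, ((εv (Fin.natAdd m k) : ℝ) : ℂ)
      * (𝓕 (Fin.natAdd m k) * starRingEnd ℂ (𝓕 (Fin.natAdd m k))) = -1 := by
    simp only [Complex.mul_conj]
    exact_mod_cast h2
  -- closed form for q
  have hcf : ∀ (x t : ℝ) (b : Fin n) (a : Fin m), q (x, t) b a =
      DNLSaux.gc (2 * v / ρ) v x t *
        (((εv (Fin.castAdd n a) : ℝ) : ℂ) * starRingEnd ℂ (𝓕 (Fin.castAdd n a))
          * 𝓕 (Fin.natAdd m b)) := by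
    intro x t b a
    have hd := DNLSaux.Dc_ne v x t
    rw [hq x t b a]
    simp only [hDD]
    simp only [mul_sub, mul_ite, mul_one, mul_zero]
    rw [Finset.sum_sub_distrib, Finset.sum_ite_eq' Finset.univ b]
    simp only [Finset.mem_univ, if_true]
    rw [show (∑ k : Fin n, ((εv (Fin.castAdd n a) * εv (Fin.natAdd m k) * εv (Fin.natAdd m b) : ℝ) : ℂ)
          * (starRingEnd ℂ (𝓕 (Fin.castAdd n a)) * 𝓕 (Fin.natAdd m k)) / DNLSaux.Dc v x t
          * (2 * ((εv (Fin.natAdd m b) : ℝ) : ℂ) * 𝓕 (Fin.natAdd m b)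
              * starRingEnd ℂ (𝓕 (Fin.natAdd m k)) / DNLSaux.Dc v x t))
        = (∑ k : Fin n, ((εv (Fin.natAdd m k) : ℝ) : ℂ)
            * (𝓕 (Fin.natAdd m k) * starRingEnd ℂ (𝓕 (Fin.natAdd m k))))
          * (2 * ((εv (Fin.castAdd n a) : ℝ) : ℂ) * starRingEnd ℂ (𝓕 (Fin.castAdd n a))
              * 𝓕 (Fin.natAdd m b) / DNLSaux.Dc v x t ^ 2) from by
      rw [Finset.sum_mul]
      refine Finset.sum_congr rfl fun k _ => ?_
      push_cast
      linear_combination (2 * ((εv (Fin.castAdd n a) : ℝ) : ℂ) * ((εv (Fin.natAdd m k) : ℝ) : ℂ)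
          * starRingEnd ℂ (𝓕 (Fin.castAdd n a)) * 𝓕 (Fin.natAdd m k) * 𝓕 (Fin.natAdd m b)
          * starRingEnd ℂ (𝓕 (Fin.natAdd m k)) / DNLSaux.Dc v x t ^ 2) * hsqc (Fin.natAdd m b)]
    rw [h2c]
    unfold DNLSaux.gc DNLSaux.Ec
    have hρc : (ρ : ℂ) ≠ 0 := Complex.ofReal_ne_zero.mpr hρ.ne'
    rcases hε (Fin.natAdd m b) with hB | hB <;> rw [hB] <;> push_cast <;>
      field_simp [hd, hρc] <;> ring
  -- smoothness
  refine ⟨hDne, ?_, ?_⟩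
  · intro b a
    have he : (fun p : ℝ × ℝ => q p b a) = fun p : ℝ × ℝ =>
        DNLSaux.gc (2 * v / ρ) v p.1 p.2 *
          (((εv (Fin.castAdd n a) : ℝ) : ℂ) * starRingEnd ℂ (𝓕 (Fin.castAdd n a))
            * 𝓕 (Fin.natAdd m b)) := by
      funext p
      obtain ⟨x, t⟩ := p
      exact hcf x t b a
    rw [he]
    exact (DNLSaux.contDiff_gc (2 * v / ρ) v).mul contDiff_const
  -- the PDE
  intro p
  obtain ⟨x, t⟩ := p
  ext b a
  set A : ℝ := 2 * v / ρ with hA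
  set C : ℂ := ((εv (Fin.castAdd n a) : ℝ) : ℂ) * starRingEnd ℂ (𝓕 (Fin.castAdd n a))
      * 𝓕 (Fin.natAdd m b) with hC
  -- nonlinear closed form
  have hNL : ∀ y : ℝ, (q (y, t) * Matrix.diagonal (fun a : Fin m => ((εv (Fin.castAdd n a) : ℝ) : ℂ))
      * (q (y, t))ᴴ * Matrix.diagonal (fun b : Fin n => ((εv (Fin.natAdd m b) : ℝ) : ℂ))
      * q (y, t)) b a = DNLSaux.Nc A v y t * C := by
    intro y
    have hcube := DNLSaux.cube A v y t
    have e0 : (q (y, t) * Matrix.diagonal (fun a : Fin m => ((εv (Fin.castAdd n a) : ℝ) : ℂ))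
        * (q (y, t))ᴴ * Matrix.diagonal (fun b : Fin n => ((εv (Fin.natAdd m b) : ℝ) : ℂ))
        * q (y, t)) b a
        = ∑ j : Fin n, (∑ i : Fin m, (q (y, t) b i * ((εv (Fin.castAdd n i) : ℝ) : ℂ))
            * starRingEnd ℂ (q (y, t) j i)) * ((εv (Fin.natAdd m j) : ℝ) : ℂ) * q (y, t) j a := by
      rw [Matrix.mul_apply]
      refine Finset.sum_congr rfl fun j _ => ?_
      rw [Matrix.mul_diagonal, Matrix.mul_apply]
      exact congrArg (fun z : ℂ => z * ((εv (Fin.natAdd m j) : ℝ) : ℂ) * q (y, t) j a)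
        (Finset.sum_congr rfl fun i _ => by
          rw [Matrix.mul_diagonal, Matrix.conjTranspose_apply, RCLike.star_def])
    rw [e0]
    simp only [hcf y t, _root_.map_mul, Complex.conj_ofReal, Complex.conj_conj]
    calc (∑ j : Fin n, (∑ i : Fin m,
            DNLSaux.gc A v y t * (((εv (Fin.castAdd n i) : ℝ) : ℂ)
                * starRingEnd ℂ (𝓕 (Fin.castAdd n i)) * 𝓕 (Fin.natAdd m b))
              * ((εv (Fin.castAdd n i) : ℝ) : ℂ)
              * (starRingEnd ℂ (DNLSaux.gc A v y t) * (((εv (Fin.castAdd n i) : ℝ) : ℂ)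
                  * 𝓕 (Fin.castAdd n i) * starRingEnd ℂ (𝓕 (Fin.natAdd m j)))))
            * ((εv (Fin.natAdd m j) : ℝ) : ℂ)
            * (DNLSaux.gc A v y t * (((εv (Fin.castAdd n a) : ℝ) : ℂ)
                * starRingEnd ℂ (𝓕 (Fin.castAdd n a)) * 𝓕 (Fin.natAdd m j))))
        = ∑ j : Fin n, ∑ i : Fin m,
            (((εv (Fin.castAdd n i) : ℝ) : ℂ) * (𝓕 (Fin.castAdd n i)
                * starRingEnd ℂ (𝓕 (Fin.castAdd n i))))
            * ((((εv (Fin.natAdd m j) : ℝ) : ℂ) * (𝓕 (Fin.natAdd m j)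
                * starRingEnd ℂ (𝓕 (Fin.natAdd m j))))
              * (DNLSaux.gc A v y t ^ 2 * starRingEnd ℂ (DNLSaux.gc A v y t) * C)) := by
          refine Finset.sum_congr rfl fun j _ => ?_
          rw [Finset.sum_mul, Finset.sum_mul]
          refine Finset.sum_congr rfl fun i _ => ?_
          rw [hC]
          rcases hε (Fin.castAdd n i) with h | h <;> rw [h] <;> push_cast <;> ring
      _ = (∑ i : Fin m, ((εv (Fin.castAdd n i) : ℝ) : ℂ) * (𝓕 (Fin.castAdd n i)
              * starRingEnd ℂ (𝓕 (Fin.castAdd n i))))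
          * ((∑ j : Fin n, ((εv (Fin.natAdd m j) : ℝ) : ℂ) * (𝓕 (Fin.natAdd m j)
              * starRingEnd ℂ (𝓕 (Fin.natAdd m j))))
            * (DNLSaux.gc A v y t ^ 2 * starRingEnd ℂ (DNLSaux.gc A v y t) * C)) := by
          rw [Finset.sum_comm]
          simp only [← Finset.mul_sum]
          rw [← Finset.sum_mul, ← Finset.sum_mul]
      _ = DNLSaux.Nc A v y t * C := by
          rw [h1c, h2c, hcube]
          ring
  -- x-derivative closed forms
  have hqx : ∀ y : ℝ, (fun z : ℝ => q (z, t) b a) = fun z : ℝ => DNLSaux.gc A v z t * C := by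
    intro y; funext z; exact hcf z t b a
  have hmpdx : ∀ y : ℝ, mpdx q (y, t) b a = DNLSaux.g1 A v y t * C := by
    intro y
    show deriv (fun z : ℝ => q (z, t) b a) y = _
    rw [hqx y]
    exact ((DNLSaux.hg_x A v t y).mul_const C).deriv
  -- assemble the entry identity
  have hscal := DNLSaux.scalar_id m n hm hn ρ hρ v hv x t
  simp only [Matrix.add_apply, Matrix.smul_apply, Matrix.zero_apply, smul_eq_mul, mpdx, mpdt,
    Matrix.of_apply]
  have e1 : (fun s : ℝ => q (x, s) b a) = fun s : ℝ => DNLSaux.gc A v x s * C :=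
    funext fun s => hcf x s b a
  rw [e1, ((DNLSaux.hg_t A v x t).mul_const C).deriv]
  rw [show (fun y : ℝ => deriv (fun z : ℝ => q (z, t) b a) y) = fun y : ℝ => DNLSaux.g1 A v y t * C
      from funext fun y => by rw [hqx y]; exact ((DNLSaux.hg_x A v t y).mul_const C).deriv]
  rw [((DNLSaux.hg1_x A v t x).mul_const C).deriv]
  rw [show (fun y : ℝ => (q (y, t) * Matrix.diagonal (fun a : Fin m => ((εv (Fin.castAdd n a) : ℝ) : ℂ))
      * (q (y, t))ᴴ * Matrix.diagonal (fun b : Fin n => ((εv (Fin.natAdd m b) : ℝ) : ℂ))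
      * q (y, t)) b a) = fun y : ℝ => DNLSaux.Nc A v y t * C from funext fun y => hNL y]
  rw [((DNLSaux.hN_x A v t x).mul_const C).deriv]
  rw [← hA] at hscal
  linear_combination C * hscal
end
end

section
/- Let m, n be positive integers, ε₁,…,ε_{m+n} ∈ {+1,−1}, ρ > 0, and set v = (m+n)ρ²/m. Let 𝓕 ∈ ℂ^{m+n} satisfy Σ_{p=1}^m εₚ|𝓕ₚ|² = 1 and Σ_{p=m+1}^{m+n} εₚ|𝓕ₚ|² = 1. Define D(x,t) = 1 + 2iv(x − 2vt) (which never vanishes) and the n×m matrix-valued function q, with row index b ∈ {1,…,n} and column index a ∈ {1,…,m}, by q_{ba}(x,t) = (2v/ρ) e^{iv(x − vt)} Σ_{k=m+1}^{m+n} ε_a ε_k ε_{b+m} · conj(𝓕_a) 𝓕_k / D(x,t) · ( δ_{k, b+m} − 2 ε_{b+m} 𝓕_{b+m} conj(𝓕_k) / D(x,t) ). Then q is smooth and satisfies the multi-component derivative nonlinear Schrödinger equation i∂ₜq + ∂ₓₓq + (2mi/(m+n)) ∂ₓ( q 𝓔ₘ q† 𝓔ₙ q ) = 0 on ℝ²,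 where 𝓔ₘ = diag(ε₁,…,ε_m) and 𝓔ₙ = diag(ε_{m+1},…,ε_{m+n}). -/
noncomputable section

open Matrix

section DnlsAux

def Dd (v x t : ℝ) : ℂ := 1 + 2 * Complex.I * (v : ℂ) * ((x : ℂ) - 2 * (v : ℂ) * (t : ℂ))
def Ee (v x t : ℝ) : ℂ := Complex.exp (Complex.I * (v : ℂ) * ((x : ℂ) - (v : ℂ) * (t : ℂ)))
def ff (v x t : ℝ) : ℂ := Ee v x t * (Dd v x t - 2) / (Dd v x t) ^ 2
def ffx (v x t : ℝ) : ℂ :=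
  Complex.I * v * Ee v x t * ((Dd v x t) ^ 2 - 4 * Dd v x t + 8) / (Dd v x t) ^ 3
def ffxx (v x t : ℝ) : ℂ :=
  -(v : ℂ) ^ 2 * Ee v x t * ((Dd v x t) ^ 3 - 6 * (Dd v x t) ^ 2 + 24 * Dd v x t - 48)
    / (Dd v x t) ^ 4
def fft (v x t : ℝ) : ℂ :=
  -Complex.I * (v : ℂ) ^ 2 * Ee v x t * ((Dd v x t) ^ 2 - 6 * Dd v x t + 16) / (Dd v x t) ^ 3
def gg (v x t : ℝ) : ℂ := -Ee v x t / (Dd v x t) ^ 3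
def ggx (v x t : ℝ) : ℂ := -Complex.I * (v : ℂ) * Ee v x t * (Dd v x t - 6) / (Dd v x t) ^ 4

lemma Dd_ne (v x t : ℝ) : Dd v x t ≠ 0 := by
  intro h
  have := congrArg Complex.re h
  simp [Dd, Complex.add_re, Complex.mul_re, Complex.mul_im] at this

lemma Ee_ne (v x t : ℝ) : Ee v x t ≠ 0 := Complex.exp_ne_zero _

lemma conj_Dd (v x t : ℝ) : (starRingEnd ℂ) (Dd v x t) = 2 - Dd v x t := by
  simp only [Dd, _root_.map_add, _root_.map_mul, _root_.map_sub, _root_.map_one, Complex.conj_I, Complex.conj_ofReal,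
    _root_.map_ofNat]
  ring

lemma conj_Ee (v x t : ℝ) :
    (starRingEnd ℂ) (Ee v x t)
      = Complex.exp (-(Complex.I * (v : ℂ) * ((x : ℂ) - (v : ℂ) * (t : ℂ)))) := by
  rw [Ee, ← Complex.exp_conj]
  congr 1
  simp only [_root_.map_neg, _root_.map_mul, _root_.map_sub, Complex.conj_I, Complex.conj_ofReal]
  ring

lemma Ee_mul_conj (v x t : ℝ) : Ee v x t * (starRingEnd ℂ) (Ee v x t) = 1 := by
  rw [conj_Ee, Ee, ← Complex.exp_add]
  simp

lemma two_sub_Dd_ne (v x t : ℝ) : 2 - Dd v x t ≠ 0 := by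
  intro h
  have := congrArg Complex.re h
  norm_num [Dd, Complex.sub_re, Complex.add_re, Complex.mul_re, Complex.mul_im] at this

lemma cube_eq (v x t : ℝ) :
    (ff v x t) ^ 2 * (starRingEnd ℂ) (ff v x t) = gg v x t := by
  have hD := Dd_ne v x t
  have h2D := two_sub_Dd_ne v x t
  have hE := Ee_mul_conj v x t
  simp only [ff, gg, _root_.map_div₀, _root_.map_mul, _root_.map_sub, _root_.map_pow, _root_.map_one, conj_Dd, _root_.map_ofNat]
  field_simp
  linear_combination (-(Ee v x t * Dd v x t * (Dd v x t - 2) ^ 2)) * hE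

lemma key_identity (v x t : ℝ) :
    Complex.I * fft v x t + ffxx v x t + 8 * (v : ℂ) * Complex.I * ggx v x t = 0 := by
  have hD := Dd_ne v x t
  simp only [fft, ffxx, ggx]
  field_simp
  linear_combination ((v : ℂ) ^ 2 * Ee v x t *
    (48 - 24 * Dd v x t + 6 * Dd v x t ^ 2 - Dd v x t ^ 3)) * Complex.I_sq

lemma hasDerivAt_coeR (x : ℝ) : HasDerivAt (fun y : ℝ => (y : ℂ)) 1 x :=
  (hasDerivAt_id x).ofReal_comp

lemma hasDerivAt_Dd_x (v t x : ℝ) :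
    HasDerivAt (fun y : ℝ => Dd v y t) (2 * Complex.I * v) x := by
  have h : HasDerivAt (fun y : ℝ => 1 + 2 * Complex.I * (v : ℂ) *
      ((y : ℂ) - 2 * (v : ℂ) * (t : ℂ))) (2 * Complex.I * v * 1) x :=
    (((hasDerivAt_coeR x).sub_const _).const_mul _).const_add 1
  simpa [Dd] using h

lemma hasDerivAt_Dd_t (v x t : ℝ) :
    HasDerivAt (fun s : ℝ => Dd v x s) (-4 * Complex.I * v ^ 2) t := by
  have h : HasDerivAt (fun s : ℝ => 1 + 2 * Complex.I * (v : ℂ) *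
      ((x : ℂ) - 2 * (v : ℂ) * (s : ℂ))) (2 * Complex.I * v * -(2 * v * 1)) t :=
    ((((hasDerivAt_coeR t).const_mul (2 * (v:ℂ))).const_sub _).const_mul _).const_add 1
  have e : (2 * Complex.I * (v:ℂ) * -(2 * v * 1)) = -4 * Complex.I * (v:ℂ) ^ 2 := by ring
  rw [e] at h
  exact h

lemma hasDerivAt_Ee_x (v t x : ℝ) :
    HasDerivAt (fun y : ℝ => Ee v y t) (Complex.I * v * Ee v x t) x := by
  have hin : HasDerivAt (fun y : ℝ => Complex.I * (v : ℂ) * ((y : ℂ) - (v : ℂ) * (t : ℂ)))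
      (Complex.I * v * 1) x := ((hasDerivAt_coeR x).sub_const _).const_mul _
  have := hin.cexp
  simpa [Ee, mul_comm, mul_left_comm] using this

lemma hasDerivAt_Ee_t (v x t : ℝ) :
    HasDerivAt (fun s : ℝ => Ee v x s) (-Complex.I * v ^ 2 * Ee v x t) t := by
  have hin : HasDerivAt (fun s : ℝ => Complex.I * (v : ℂ) * ((x : ℂ) - (v : ℂ) * (s : ℂ)))
      (Complex.I * v * -((v:ℂ) * 1)) t :=
    (((hasDerivAt_coeR t).const_mul ((v:ℂ))).const_sub _).const_mul _
  have h := hin.cexp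
  have e : Complex.exp (Complex.I * ↑v * (↑x - ↑v * ↑t)) * (Complex.I * ↑v * -(↑v * 1))
      = -Complex.I * v ^ 2 * Ee v x t := by rw [Ee]; ring
  rw [e] at h
  exact h

lemma hasDerivAt_Dd_pow (k : ℕ) (v t x : ℝ) :
    HasDerivAt (fun y : ℝ => Dd v y t ^ k)
      (((k:ℕ):ℂ) * Dd v x t ^ (k-1) * (2 * Complex.I * v)) x :=
  (hasDerivAt_pow k (Dd v x t)).comp x (hasDerivAt_Dd_x v t x)

lemma hasDerivAt_ff_x (v t x : ℝ) :
    HasDerivAt (fun y : ℝ => ff v y t) (ffx v x t) x := by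
  have hD := Dd_ne v x t
  have hnum : HasDerivAt (fun y : ℝ => Ee v y t * (Dd v y t - 2))
      (Complex.I * v * Ee v x t * (Dd v x t - 2) + Ee v x t * (2 * Complex.I * v)) x :=
    (hasDerivAt_Ee_x v t x).mul ((hasDerivAt_Dd_x v t x).sub_const 2)
  have hden := hasDerivAt_Dd_pow 2 v t x
  have h := hnum.div hden (pow_ne_zero 2 hD)
  refine h.congr_deriv (Eq.symm ?_)
  rw [ffx]
  field_simp
  ring

lemma hasDerivAt_ffx_x (v t x : ℝ) :
    HasDerivAt (fun y : ℝ => ffx v y t) (ffxx v x t) x := by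
  have hD := Dd_ne v x t
  have hpoly : HasDerivAt (fun y : ℝ => (Dd v y t) ^ 2 - 4 * Dd v y t + 8)
      (((2:ℕ):ℂ) * Dd v x t ^ (2-1) * (2 * Complex.I * v) - 4 * (2 * Complex.I * v)) x :=
    ((hasDerivAt_Dd_pow 2 v t x).sub ((hasDerivAt_Dd_x v t x).const_mul 4)).add_const 8
  have hnum : HasDerivAt
      (fun y : ℝ => Complex.I * v * Ee v y t * ((Dd v y t) ^ 2 - 4 * Dd v y t + 8))
      ((Complex.I * v * (Complex.I * v * Ee v x t)) * ((Dd v x t) ^ 2 - 4 * Dd v x t + 8)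
        + (Complex.I * v * Ee v x t) *
          (((2:ℕ):ℂ) * Dd v x t ^ (2-1) * (2 * Complex.I * v) - 4 * (2 * Complex.I * v))) x := by
    have := (((hasDerivAt_Ee_x v t x).const_mul (Complex.I * (v:ℂ))).mul hpoly)
    exact this.congr_deriv (by ring)
  have hden := hasDerivAt_Dd_pow 3 v t x
  have h := hnum.div hden (pow_ne_zero 3 hD)
  refine h.congr_deriv (Eq.symm ?_)
  rw [ffxx]
  have hI := Complex.I_sq
  field_simp
  push_cast
  linear_combination (-((v:ℂ)^2 * Ee v x t *
    (Dd v x t ^ 3 - 6 * Dd v x t ^ 2 + 24 * Dd v x t - 48) * Dd v x t ^ 2)) * hI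

lemma hasDerivAt_ff_t (v x t : ℝ) :
    HasDerivAt (fun s : ℝ => ff v x s) (fft v x t) t := by
  have hD := Dd_ne v x t
  have hnum : HasDerivAt (fun s : ℝ => Ee v x s * (Dd v x s - 2))
      (-Complex.I * v ^ 2 * Ee v x t * (Dd v x t - 2)
        + Ee v x t * (-4 * Complex.I * v ^ 2)) t :=
    (hasDerivAt_Ee_t v x t).mul ((hasDerivAt_Dd_t v x t).sub_const 2)
  have hden : HasDerivAt (fun s : ℝ => Dd v x s ^ 2)
      (((2:ℕ):ℂ) * Dd v x t ^ (2-1) * (-4 * Complex.I * v ^ 2)) t :=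
    (hasDerivAt_pow 2 (Dd v x t)).comp t (hasDerivAt_Dd_t v x t)
  have h := hnum.div hden (pow_ne_zero 2 hD)
  refine h.congr_deriv (Eq.symm ?_)
  rw [fft]
  field_simp
  ring

lemma hasDerivAt_gg_x (v t x : ℝ) :
    HasDerivAt (fun y : ℝ => gg v y t) (ggx v x t) x := by
  have hD := Dd_ne v x t
  have hnum : HasDerivAt (fun y : ℝ => -Ee v y t) (-(Complex.I * v * Ee v x t)) x :=
    (hasDerivAt_Ee_x v t x).neg
  have hden := hasDerivAt_Dd_pow 3 v t x
  have h := hnum.div hden (pow_ne_zero 3 hD)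
  refine h.congr_deriv (Eq.symm ?_)
  rw [ggx]
  field_simp
  ring

lemma contDiff_ff (v : ℝ) : ContDiff ℝ (⊤ : ℕ∞) fun p : ℝ × ℝ => ff v p.1 p.2 := by
  have h1 : ContDiff ℝ (⊤ : ℕ∞) (fun p : ℝ × ℝ => ((p.1 : ℂ))) :=
    Complex.ofRealCLM.contDiff.comp contDiff_fst
  have h2 : ContDiff ℝ (⊤ : ℕ∞) (fun p : ℝ × ℝ => ((p.2 : ℂ))) :=
    Complex.ofRealCLM.contDiff.comp contDiff_snd
  have hDc : ContDiff ℝ (⊤ : ℕ∞) (fun p : ℝ × ℝ => Dd v p.1 p.2) := by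
    unfold Dd
    exact contDiff_const.add (contDiff_const.mul (h1.sub (contDiff_const.mul h2)))
  have hEc : ContDiff ℝ (⊤ : ℕ∞) (fun p : ℝ × ℝ => Ee v p.1 p.2) := by
    unfold Ee
    exact (Complex.contDiff_exp (𝕜 := ℝ)).comp
      (contDiff_const.mul (h1.sub (contDiff_const.mul h2)))
  have heq : (fun p : ℝ × ℝ => ff v p.1 p.2)
      = fun p => (Ee v p.1 p.2 * (Dd v p.1 p.2 - 2)) * (Dd v p.1 p.2 * Dd v p.1 p.2)⁻¹ := by
    funext p
    rw [ff, div_eq_mul_inv, sq]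
  rw [heq]
  exact (hEc.mul (hDc.sub contDiff_const)).mul ((hDc.mul hDc).inv
    (fun p => mul_ne_zero (Dd_ne v p.1 p.2) (Dd_ne v p.1 p.2)))

end DnlsAux

/-- The rational solution of the multi-component DNLS related to
`SU(m+n)/S(U(m)×U(n))` obtained from a pair of imaginary poles `±iρ` with normalized
polarization vector `𝓕`: it is smooth and solves
`i qₜ + qₓₓ + (2mi/(m+n)) (q 𝓔ₘ q† 𝓔ₙ q)ₓ = 0`. -/
theorem multicomponent_dnls_rational_imaginary_poles (m n : ℕ) (hm : 0 < m) (hn : 0 < n)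
    (εv : Fin (m + n) → ℝ) (hε : ∀ p, εv p = 1 ∨ εv p = -1)
    (ρ : ℝ) (hρ : 0 < ρ) (v : ℝ) (hv : v = (m + n) * ρ ^ 2 / m)
    (𝓕 : Fin (m + n) → ℂ)
    (h1 : ∑ p : Fin m, εv (Fin.castAdd n p) * Complex.normSq (𝓕 (Fin.castAdd n p)) = 1)
    (h2 : ∑ p : Fin n, εv (Fin.natAdd m p) * Complex.normSq (𝓕 (Fin.natAdd m p)) = 1)
    (D : ℝ → ℝ → ℂ)
    (hD : ∀ x t : ℝ, D x t = 1 + 2 * Complex.I * (v : ℂ) * ((x : ℂ) - 2 * (v : ℂ) * (t : ℂ)))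
    (q : ℝ × ℝ → Matrix (Fin n) (Fin m) ℂ)
    (hq : ∀ (x t : ℝ) (b : Fin n) (a : Fin m), q (x, t) b a =
      ((2 * v / ρ : ℝ) : ℂ) * Complex.exp (Complex.I * (v : ℂ) * ((x : ℂ) - (v : ℂ) * (t : ℂ)))
        * ∑ k : Fin n,
          ((εv (Fin.castAdd n a) * εv (Fin.natAdd m k) * εv (Fin.natAdd m b) : ℝ) : ℂ)
            * (starRingEnd ℂ (𝓕 (Fin.castAdd n a)) * 𝓕 (Fin.natAdd m k)) / D x t
            * ((if k = b then 1 else 0)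
              - 2 * ((εv (Fin.natAdd m b) : ℝ) : ℂ) * 𝓕 (Fin.natAdd m b)
                * starRingEnd ℂ (𝓕 (Fin.natAdd m k)) / D x t)) :
    (∀ x t : ℝ, D x t ≠ 0) ∧
    (∀ (b : Fin n) (a : Fin m), ContDiff ℝ (⊤ : ℕ∞) fun p : ℝ × ℝ => q p b a) ∧
    (∀ p : ℝ × ℝ,
      Complex.I • mpdt q p + mpdx (fun p' => mpdx q p') p
        + ((2 * (m : ℂ) * Complex.I) / ((m : ℂ) + (n : ℂ))) •
          mpdx (fun p' =>
            q p' * Matrix.diagonal (fun a : Fin m => ((εv (Fin.castAdd n a) : ℝ) : ℂ))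
              * (q p')ᴴ * Matrix.diagonal (fun b : Fin n => ((εv (Fin.natAdd m b) : ℝ) : ℂ))
              * q p') p = 0) := by
  have hε2 : ∀ p, ((εv p : ℝ) : ℂ) * ((εv p : ℝ) : ℂ) = 1 := by
    intro p
    rcases hε p with h | h <;> rw [h] <;> norm_num
  have h1' : ∑ a : Fin m, ((εv (Fin.castAdd n a) : ℝ) : ℂ)
      * (𝓕 (Fin.castAdd n a) * (starRingEnd ℂ) (𝓕 (Fin.castAdd n a))) = 1 := by
    rw [show (1 : ℂ) = ((1 : ℝ) : ℂ) from by norm_num, ← h1, Complex.ofReal_sum]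
    exact Finset.sum_congr rfl fun a _ => by rw [Complex.mul_conj]; push_cast; ring
  have h2' : ∑ b : Fin n, ((εv (Fin.natAdd m b) : ℝ) : ℂ)
      * (𝓕 (Fin.natAdd m b) * (starRingEnd ℂ) (𝓕 (Fin.natAdd m b))) = 1 := by
    rw [show (1 : ℂ) = ((1 : ℝ) : ℂ) from by norm_num, ← h2, Complex.ofReal_sum]
    exact Finset.sum_congr rfl fun b _ => by rw [Complex.mul_conj]; push_cast; ring
  -- the coefficient function
  set c : Fin n → Fin m → ℂ := fun b a =>
    ((2 * v / ρ : ℝ) : ℂ) * ((εv (Fin.castAdd n a) : ℝ) : ℂ)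
      * (starRingEnd ℂ) (𝓕 (Fin.castAdd n a)) * 𝓕 (Fin.natAdd m b) with hc
  have hqf : ∀ (x t : ℝ) (b : Fin n) (a : Fin m), q (x, t) b a = c b a * ff v x t := by
    intro x t b a
    rw [hq x t b a, hD x t,
      show (1 + 2 * Complex.I * (v : ℂ) * ((x : ℂ) - 2 * (v : ℂ) * (t : ℂ))) = Dd v x t from rfl,
      show Complex.exp (Complex.I * (v : ℂ) * ((x : ℂ) - (v : ℂ) * (t : ℂ))) = Ee v x t from rfl]
    have hDne := Dd_ne v x t
    have hsum : (∑ k : Fin n,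
        ((εv (Fin.castAdd n a) * εv (Fin.natAdd m k) * εv (Fin.natAdd m b) : ℝ) : ℂ)
          * (starRingEnd ℂ (𝓕 (Fin.castAdd n a)) * 𝓕 (Fin.natAdd m k)) / Dd v x t
          * ((if k = b then 1 else 0)
            - 2 * ((εv (Fin.natAdd m b) : ℝ) : ℂ) * 𝓕 (Fin.natAdd m b)
              * starRingEnd ℂ (𝓕 (Fin.natAdd m k)) / Dd v x t))
        = ((εv (Fin.castAdd n a) : ℝ) : ℂ)
            * ((starRingEnd ℂ) (𝓕 (Fin.castAdd n a)) * 𝓕 (Fin.natAdd m b))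
            * (Dd v x t - 2) / Dd v x t ^ 2 := by
      have hterm : ∀ k : Fin n,
          ((εv (Fin.castAdd n a) * εv (Fin.natAdd m k) * εv (Fin.natAdd m b) : ℝ) : ℂ)
            * (starRingEnd ℂ (𝓕 (Fin.castAdd n a)) * 𝓕 (Fin.natAdd m k)) / Dd v x t
            * ((if k = b then 1 else 0)
              - 2 * ((εv (Fin.natAdd m b) : ℝ) : ℂ) * 𝓕 (Fin.natAdd m b)
                * starRingEnd ℂ (𝓕 (Fin.natAdd m k)) / Dd v x t)
          = (if k = b then
              ((εv (Fin.castAdd n a) * εv (Fin.natAdd m k) * εv (Fin.natAdd m b) : ℝ) : ℂ)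
                * (starRingEnd ℂ (𝓕 (Fin.castAdd n a)) * 𝓕 (Fin.natAdd m k)) / Dd v x t
              else 0)
            - (2 * ((εv (Fin.castAdd n a) : ℝ) : ℂ)
                * ((starRingEnd ℂ) (𝓕 (Fin.castAdd n a)) * 𝓕 (Fin.natAdd m b)) / Dd v x t ^ 2)
              * (((εv (Fin.natAdd m k) : ℝ) : ℂ)
                * (𝓕 (Fin.natAdd m k) * (starRingEnd ℂ) (𝓕 (Fin.natAdd m k)))) := by
        intro k
        rw [mul_sub, mul_ite, mul_one, mul_zero]
        congr 1
        push_cast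
        linear_combination (2 * ((εv (Fin.castAdd n a) : ℝ) : ℂ) * ((εv (Fin.natAdd m k) : ℝ) : ℂ)
          * (starRingEnd ℂ (𝓕 (Fin.castAdd n a)) * 𝓕 (Fin.natAdd m k)) * 𝓕 (Fin.natAdd m b)
          * (starRingEnd ℂ) (𝓕 (Fin.natAdd m k)) / Dd v x t ^ 2) * hε2 (Fin.natAdd m b)
      rw [Finset.sum_congr rfl fun k _ => hterm k, Finset.sum_sub_distrib,
        Finset.sum_ite_eq' Finset.univ b, ← Finset.mul_sum, h2']
      simp only [Finset.mem_univ, if_true, mul_one]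
      push_cast
      field_simp
      linear_combination (((εv (Fin.castAdd n a) : ℝ) : ℂ)
        * (starRingEnd ℂ (𝓕 (Fin.castAdd n a)) * 𝓕 (Fin.natAdd m b)) * Dd v x t)
        * hε2 (Fin.natAdd m b)
    rw [hsum]
    simp only [hc]
    rw [ff]
    ring
  have hDne0 : ∀ x t : ℝ, D x t ≠ 0 := by
    intro x t
    rw [hD x t]
    exact Dd_ne v x t
  set K : ℂ := ((2 * v / ρ : ℝ) : ℂ) with hK
  have hKconj : (starRingEnd ℂ) K = K := by rw [hK]; exact Complex.conj_ofReal _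
  -- cubic entry
  have hQ3 : ∀ (x t : ℝ) (b : Fin n) (a : Fin m),
      (q (x, t) * Matrix.diagonal (fun a : Fin m => ((εv (Fin.castAdd n a) : ℝ) : ℂ))
        * (q (x, t))ᴴ * Matrix.diagonal (fun b : Fin n => ((εv (Fin.natAdd m b) : ℝ) : ℂ))
        * q (x, t)) b a = (K ^ 2 * c b a) * gg v x t := by
    intro x t b a
    have hent : (q (x, t) * Matrix.diagonal (fun a : Fin m => ((εv (Fin.castAdd n a) : ℝ) : ℂ))
        * (q (x, t))ᴴ * Matrix.diagonal (fun b : Fin n => ((εv (Fin.natAdd m b) : ℝ) : ℂ))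
        * q (x, t)) b a
        = ∑ b₁ : Fin n, ∑ a₁ : Fin m,
            (q (x, t) b a₁ * ((εv (Fin.castAdd n a₁) : ℝ) : ℂ)
              * (starRingEnd ℂ) (q (x, t) b₁ a₁) * ((εv (Fin.natAdd m b₁) : ℝ) : ℂ)
              * q (x, t) b₁ a) := by
      rw [Matrix.mul_apply]
      simp only [Matrix.mul_diagonal]
      simp only [Matrix.mul_apply]
      simp only [Matrix.mul_diagonal, Matrix.conjTranspose_apply, Complex.star_def]
      simp only [Finset.sum_mul]
      simp only [Matrix.diagonal_apply, mul_ite, mul_zero, ite_mul, zero_mul,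
        Finset.sum_ite_eq', Finset.mem_univ, if_true]
    rw [hent]
    have hterm : ∀ (b₁ : Fin n) (a₁ : Fin m),
        q (x, t) b a₁ * ((εv (Fin.castAdd n a₁) : ℝ) : ℂ)
          * (starRingEnd ℂ) (q (x, t) b₁ a₁) * ((εv (Fin.natAdd m b₁) : ℝ) : ℂ)
          * q (x, t) b₁ a
        = ((K ^ 2 * c b a) * ((ff v x t) ^ 2 * (starRingEnd ℂ) (ff v x t))
            * (((εv (Fin.natAdd m b₁) : ℝ) : ℂ)
              * (𝓕 (Fin.natAdd m b₁) * (starRingEnd ℂ) (𝓕 (Fin.natAdd m b₁)))))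
          * (((εv (Fin.castAdd n a₁) : ℝ) : ℂ)
              * (𝓕 (Fin.castAdd n a₁) * (starRingEnd ℂ) (𝓕 (Fin.castAdd n a₁)))) := by
      intro b₁ a₁
      rw [hqf x t b a₁, hqf x t b₁ a₁, hqf x t b₁ a]
      simp only [hc, _root_.map_mul, Complex.conj_ofReal, Complex.conj_conj, hKconj]
      linear_combination (K ^ 3 * ff v x t ^ 2 * (starRingEnd ℂ) (ff v x t)
        * ((εv (Fin.castAdd n a) : ℝ) : ℂ) * (starRingEnd ℂ) (𝓕 (Fin.castAdd n a))
        * 𝓕 (Fin.natAdd m b) * ((εv (Fin.castAdd n a₁) : ℝ) : ℂ)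
        * (𝓕 (Fin.castAdd n a₁) * (starRingEnd ℂ) (𝓕 (Fin.castAdd n a₁)))
        * (((εv (Fin.natAdd m b₁) : ℝ) : ℂ)
          * (𝓕 (Fin.natAdd m b₁) * (starRingEnd ℂ) (𝓕 (Fin.natAdd m b₁)))))
        * hε2 (Fin.castAdd n a₁)
    calc ∑ b₁ : Fin n, ∑ a₁ : Fin m,
            (q (x, t) b a₁ * ((εv (Fin.castAdd n a₁) : ℝ) : ℂ)
              * (starRingEnd ℂ) (q (x, t) b₁ a₁) * ((εv (Fin.natAdd m b₁) : ℝ) : ℂ)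
              * q (x, t) b₁ a)
        = ∑ b₁ : Fin n,
            ((K ^ 2 * c b a) * ((ff v x t) ^ 2 * (starRingEnd ℂ) (ff v x t))
              * (((εv (Fin.natAdd m b₁) : ℝ) : ℂ)
                * (𝓕 (Fin.natAdd m b₁) * (starRingEnd ℂ) (𝓕 (Fin.natAdd m b₁))))) := by
          refine Finset.sum_congr rfl fun b₁ _ => ?_
          rw [Finset.sum_congr rfl fun a₁ _ => hterm b₁ a₁, ← Finset.mul_sum, h1', mul_one]
      _ = (K ^ 2 * c b a) * ((ff v x t) ^ 2 * (starRingEnd ℂ) (ff v x t)) := by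
          rw [← Finset.mul_sum, h2', mul_one]
      _ = (K ^ 2 * c b a) * gg v x t := by rw [cube_eq]
  -- coefficient identity
  have hKco : (2 * (m : ℂ) * Complex.I / ((m : ℂ) + (n : ℂ))) * K ^ 2
      = 8 * (v : ℂ) * Complex.I := by
    have hmc : (m : ℂ) ≠ 0 := Nat.cast_ne_zero.mpr hm.ne'
    have hmn : (m : ℂ) + (n : ℂ) ≠ 0 := by
      have h := Nat.cast_ne_zero (R := ℂ).mpr (show m + n ≠ 0 by omega)
      push_cast at h
      exact h
    have hρc : (ρ : ℂ) ≠ 0 := Complex.ofReal_ne_zero.mpr hρ.ne'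
    have hvm : (v : ℂ) * (m : ℂ) = ((m : ℂ) + (n : ℂ)) * (ρ : ℂ) ^ 2 := by
      have hr : v * m = (m + n) * ρ ^ 2 := by
        rw [hv]
        field_simp
      have h := congrArg (Complex.ofReal) hr
      push_cast at h
      exact h
    rw [hK]
    push_cast
    field_simp
    linear_combination (8 * (v : ℂ)) * hvm
  refine ⟨hDne0, ?_, ?_⟩
  · intro b a
    have heq : (fun p : ℝ × ℝ => q p b a) = fun p : ℝ × ℝ => c b a * ff v p.1 p.2 :=
      funext fun p => hqf p.1 p.2 b a
    rw [heq]
    exact contDiff_const.mul (contDiff_ff v)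
  · rintro ⟨x, t⟩
    have hmpdx : ∀ (x t : ℝ) (b : Fin n) (a : Fin m),
        mpdx q (x, t) b a = c b a * ffx v x t := by
      intro x t b a
      show deriv (fun y => q (y, t) b a) x = _
      rw [show (fun y => q (y, t) b a) = fun y => c b a * ff v y t from
        funext fun y => hqf y t b a]
      exact (((hasDerivAt_ff_x v t x).const_mul (c b a))).deriv
    have hmpdt : ∀ (b : Fin n) (a : Fin m), mpdt q (x, t) b a = c b a * fft v x t := by
      intro b a
      show deriv (fun s => q (x, s) b a) t = _
      rw [show (fun s => q (x, s) b a) = fun s => c b a * ff v x s from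
        funext fun s => hqf x s b a]
      exact ((hasDerivAt_ff_t v x t).const_mul (c b a)).deriv
    have hmpdxx : ∀ (b : Fin n) (a : Fin m),
        mpdx (fun p' => mpdx q p') (x, t) b a = c b a * ffxx v x t := by
      intro b a
      show deriv (fun y => mpdx q (y, t) b a) x = _
      rw [show (fun y => mpdx q (y, t) b a) = fun y => c b a * ffx v y t from
        funext fun y => hmpdx y t b a]
      exact ((hasDerivAt_ffx_x v t x).const_mul (c b a)).deriv
    have hmpdx3 : ∀ (b : Fin n) (a : Fin m),
        mpdx (fun p' =>
          q p' * Matrix.diagonal (fun a : Fin m => ((εv (Fin.castAdd n a) : ℝ) : ℂ))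
            * (q p')ᴴ * Matrix.diagonal (fun b : Fin n => ((εv (Fin.natAdd m b) : ℝ) : ℂ))
            * q p') (x, t) b a = (K ^ 2 * c b a) * ggx v x t := by
      intro b a
      show deriv (fun y =>
        (q (y, t) * Matrix.diagonal (fun a : Fin m => ((εv (Fin.castAdd n a) : ℝ) : ℂ))
          * (q (y, t))ᴴ * Matrix.diagonal (fun b : Fin n => ((εv (Fin.natAdd m b) : ℝ) : ℂ))
          * q (y, t)) b a) x = _
      rw [show (fun y =>
        (q (y, t) * Matrix.diagonal (fun a : Fin m => ((εv (Fin.castAdd n a) : ℝ) : ℂ))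
          * (q (y, t))ᴴ * Matrix.diagonal (fun b : Fin n => ((εv (Fin.natAdd m b) : ℝ) : ℂ))
          * q (y, t)) b a) = fun y => (K ^ 2 * c b a) * gg v y t from
        funext fun y => hQ3 y t b a]
      exact ((hasDerivAt_gg_x v t x).const_mul (K ^ 2 * c b a)).deriv
    ext b a
    simp only [Matrix.add_apply, Matrix.smul_apply, Matrix.zero_apply, smul_eq_mul]
    rw [show mpdt q (x, t) b a = c b a * fft v x t from hmpdt b a]
    rw [hmpdxx b a, hmpdx3 b a]
    have hkey := key_identity v x t
    linear_combination (c b a) * hkey + (c b a * ggx v x t) * hKco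
end
end
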